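/- arXiv:1910.10538 — 10 statements merged into one kernel-verified Lean document; each statement's English description precedes it below -/
import Mathlib

section
/- Let H be an infinite-dimensional separable Hilbert space with orthonormal basis (e_n)_{n≥0}, T1 the unilateral shift (T1 e_n = e_{n+1}) and T2 the Bergman shift (T2 e_n = sqrt(n/(n+1)) e_{n+1}). If X is a bounded operator on H satisfying T1 X = X T2, then for all n ≥ 1, ⟨X e_n, e_n⟩ = sqrt(n+1) · ⟨X e_0, e_0⟩. -/
/-!
Pairing `T1 (X e n) = X (T2 e n)` with `e (n + 1)`, and using `⟪T1 v, e (n + 1)⟫ = ⟪v, e n⟫`,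
gives `a n = √(n / (n + 1)) * a (n + 1)` for the diagonal entries `a n = ⟪X (e n), e n⟫`.
At `n = 0` this forces `a 0 = 0`, and for `n ≥ 1` it gives `a n = √n * a 1`. Since
`‖a n‖ ≤ ‖X‖`, also `a 1 = 0`: every diagonal entry vanishes, so both sides of the identity are `0`.
-/

open scoped InnerProductSpace ComplexConjugate
open Filter

section

variable {𝕜 E : Type*} [RCLike 𝕜] [NormedAddCommGroup E] [InnerProductSpace 𝕜 E]

theorem HilbertBasis.inner_apply_of_apply_basis_eq {ι : Type*} (e : HilbertBasis ι 𝕜 E)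
    {σ : ι → ι} (hσ : σ.Injective) {S : E →L[𝕜] E} (hS : ∀ i, S (e i) = e (σ i)) (v : E) (i : ι) :
    ⟪S v, e (σ i)⟫_𝕜 = ⟪v, e i⟫_𝕜 := by
  have hfun : (innerSL 𝕜 (e (σ i))).comp S = innerSL 𝕜 (e i) := by
    refine ContinuousLinearMap.ext_on
      (Submodule.dense_iff_topologicalClosure_eq_top.mpr e.dense_span) ?_
    classical
    rintro _ ⟨j, rfl⟩
    simp [hS, orthonormal_iff_ite.mp e.orthonormal, hσ.eq_iff]
  rw [← inner_conj_symm, ← inner_conj_symm v, ← innerSL_apply_apply, ← innerSL_apply_apply,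
    ← hfun, ContinuousLinearMap.comp_apply]

theorem norm_inner_apply_self_le_opNorm (X : E →L[𝕜] E) {v : E} (hv : ‖v‖ = 1) :
    ‖⟪X v, v⟫_𝕜‖ ≤ ‖X‖ :=
  calc ‖⟪X v, v⟫_𝕜‖ ≤ ‖X v‖ * ‖v‖ := norm_inner_le_norm _ _
    _ ≤ ‖X‖ * ‖v‖ * ‖v‖ := by gcongr; exact X.le_opNorm v
    _ = ‖X‖ := by rw [hv, mul_one, mul_one]

theorem inner_apply_self_eq_conj_mul_of_comp_eq_comp (e : HilbertBasis ℕ 𝕜 E)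
    {S W X : E →L[𝕜] E} (w : ℕ → 𝕜) (hS : ∀ n, S (e n) = e (n + 1))
    (hW : ∀ n, W (e n) = w n • e (n + 1)) (hX : S ∘L X = X ∘L W) (n : ℕ) :
    ⟪X (e n), e n⟫_𝕜 = conj (w n) * ⟪X (e (n + 1)), e (n + 1)⟫_𝕜 :=
  calc ⟪X (e n), e n⟫_𝕜 = ⟪S (X (e n)), e (n + 1)⟫_𝕜 :=
        (e.inner_apply_of_apply_basis_eq (add_left_injective 1) hS _ n).symm
    _ = ⟪X (W (e n)), e (n + 1)⟫_𝕜 := by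
        rw [← ContinuousLinearMap.comp_apply, hX, ContinuousLinearMap.comp_apply]
    _ = conj (w n) * ⟪X (e (n + 1)), e (n + 1)⟫_𝕜 := by
        rw [hW, map_smul, inner_smul_left]

end

section

variable {𝕜 : Type*} [RCLike 𝕜]

theorem eq_sqrt_mul_of_eq_sqrt_div_mul {a : ℕ → 𝕜}
    (ha : ∀ n : ℕ, a n = ((√(n / (n + 1)) : ℝ) : 𝕜) * a (n + 1)) {n : ℕ} (hn : 1 ≤ n) :
    a n = (√n : ℝ) * a 1 := by
  induction n, hn using Nat.le_induction with
  | base => simp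
  | succ k hk ih =>
    have hpos : (0 : ℝ) < √(k / (k + 1)) := Real.sqrt_pos.mpr (by positivity)
    have hsplit : √(k / (k + 1)) * √(k + 1) = √k := by
      rw [← Real.sqrt_mul (by positivity)]
      field_simp
    apply mul_left_cancel₀ (RCLike.ofReal_ne_zero.mpr hpos.ne')
    rw [← ha k, ih, ← mul_assoc, ← RCLike.ofReal_mul, Nat.cast_succ, hsplit]

theorem eq_zero_of_norm_sqrt_mul_le {c : 𝕜} {C : ℝ}
    (h : ∀ᶠ n : ℕ in atTop, ‖((√n : ℝ) : 𝕜) * c‖ ≤ C) : c = 0 := by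
  by_contra hc
  have hgrow : Tendsto (fun n : ℕ => √n * ‖c‖) atTop atTop :=
    (Real.tendsto_sqrt_atTop.comp tendsto_natCast_atTop_atTop).atTop_mul_const
      (norm_pos_iff.mpr hc)
  obtain ⟨n, hgt, hle⟩ := ((hgrow.eventually_gt_atTop C).and h).exists
  rw [norm_mul, RCLike.norm_ofReal, abs_of_nonneg (Real.sqrt_nonneg _)] at hle
  exact (hgt.trans_le hle).false

end

theorem intertwiner_diagonal_entries_general
    {H : Type*} [NormedAddCommGroup H] [InnerProductSpace ℂ H]
    (e : HilbertBasis ℕ ℂ H) (T1 T2 X : H →L[ℂ] H)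
    (hT1 : ∀ n : ℕ, T1 (e n) = e (n + 1))
    (hT2 : ∀ n : ℕ, T2 (e n) = (Real.sqrt (n / (n + 1)) : ℂ) • e (n + 1))
    (hX : T1 ∘L X = X ∘L T2) :
    ∀ n : ℕ, 1 ≤ n →
      ⟪X (e n), e n⟫_ℂ = (Real.sqrt (n + 1) : ℂ) * ⟪X (e 0), e 0⟫_ℂ := by
  set a : ℕ → ℂ := fun n => ⟪X (e n), e n⟫_ℂ
  have hrec (n : ℕ) : a n = (√(n / (n + 1)) : ℂ) * a (n + 1) := by
    simpa using inner_apply_self_eq_conj_mul_of_comp_eq_comp e _ hT1 hT2 hX n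
  have hsqrt : ∀ {n : ℕ}, 1 ≤ n → a n = (√n : ℂ) * a 1 := eq_sqrt_mul_of_eq_sqrt_div_mul hrec
  have ha0 : a 0 = 0 := by simpa using hrec 0
  have ha1 : a 1 = 0 := eq_zero_of_norm_sqrt_mul_le (C := ‖X‖) <| eventually_atTop.mpr
    ⟨1, fun k hk => hsqrt hk ▸ norm_inner_apply_self_le_opNorm X (e.orthonormal.1 k)⟩
  intro n hn
  change a n = _ * a 0
  rw [hsqrt hn, ha1, ha0, mul_zero, mul_zero]

/-- If `X` intertwines the unilateral shift `T1` and the Bergman shift `T2`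
(`T1 X = X T2`), then `⟨X e_n, e_n⟩ = √(n+1) ⟨X e_0, e_0⟩` for all `n ≥ 1`. -/
theorem intertwiner_diagonal_entries
    {H : Type*} [NormedAddCommGroup H] [InnerProductSpace ℂ H] [CompleteSpace H]
    (e : HilbertBasis ℕ ℂ H) (T1 T2 X : H →L[ℂ] H)
    (hT1 : ∀ n : ℕ, T1 (e n) = e (n + 1))
    (hT2 : ∀ n : ℕ, T2 (e n) = (Real.sqrt (n / (n + 1)) : ℂ) • e (n + 1))
    (hX : T1 ∘L X = X ∘L T2) :
    ∀ n : ℕ, 1 ≤ n →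
      ⟪X (e n), e n⟫_ℂ = (Real.sqrt (n + 1) : ℂ) * ⟪X (e 0), e 0⟫_ℂ :=
  intertwiner_diagonal_entries_general e T1 T2 X hT1 hT2 hX
end

section
/- Rosenblum–Halmos lemma: Let T, X be bounded operators on a complex Hilbert space (or elements of a complex unital Banach algebra). If TX = XT and X = TZ - ZT for some bounded operator Z, then the spectrum of X is {0} (X is quasinilpotent). -/
/-!
Kleinecke–Shirokov argument. `D = δ_T` is a derivation with `D Z = X` and `D² Z = D X = 0`, so the
Leibniz rule gives `Dⁿ (Zⁿ) = n! Xⁿ`. Since `‖D‖ ≤ 2‖T‖`, this yields `n! ‖Xⁿ‖ ≤ (2‖T‖‖Z‖)ⁿ`.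
For `k ∈ σ(X)` we have `kⁿ ∈ σ(Xⁿ)`, hence `‖k‖ⁿ ≤ ‖Xⁿ‖ ‖1‖ ≤ ‖1‖ (2‖T‖‖Z‖)ⁿ / n! → 0`, so `k = 0`;
the spectrum is nonempty, so it is `{0}`.
-/

open Filter
open scoped Nat

section Derivation

variable {A : Type*} [Ring A] {D : A →+ A} (hD : ∀ a b, D (a * b) = D a * b + a * D b)
include hD

theorem map_one_eq_zero_of_leibniz : D 1 = 0 := by
  simpa using hD 1 1

variable {z : A} (hz : D (D z) = 0)
include hz

theorem iterate_succ_mul_of_leibniz (m : ℕ) (b : A) :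
    D^[m + 1] (z * b) = z * D^[m + 1] b + (m + 1) • (D z * D^[m] b) := by
  induction m with
  | zero => simp [hD, add_comm]
  | succ m ih =>
    rw [Function.iterate_succ_apply' _ (m + 1), ih, map_add, map_nsmul, hD, hD, hz,
      ← Function.iterate_succ_apply' D (m + 1), ← Function.iterate_succ_apply' D m]
    simp only [zero_mul, zero_add, add_smul, one_smul]
    abel

theorem iterate_pow_eq_zero_of_leibniz {n k : ℕ} (h : n < k) : D^[k] (z ^ n) = 0 := by
  induction n generalizing k with
  | zero =>
    obtain ⟨k, rfl⟩ := Nat.exists_eq_add_of_lt h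
    rw [pow_zero, Function.iterate_succ_apply, map_one_eq_zero_of_leibniz hD, iterate_map_zero]
  | succ n ih =>
    obtain ⟨k, rfl⟩ : ∃ j, k = j + 1 := ⟨k - 1, by omega⟩
    rw [pow_succ', iterate_succ_mul_of_leibniz hD hz, ih (by omega), ih (by omega)]
    simp

theorem iterate_pow_self_of_leibniz (n : ℕ) : D^[n] (z ^ n) = n ! • D z ^ n := by
  induction n with
  | zero => simp
  | succ n ih =>
    rw [pow_succ', iterate_succ_mul_of_leibniz hD hz,
      iterate_pow_eq_zero_of_leibniz hD hz n.lt_succ_self, ih, mul_zero, zero_add, mul_smul_comm,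
      smul_smul, ← pow_succ', Nat.factorial_succ]

end Derivation

theorem norm_iterate_le_of_norm_le {E : Type*} [SeminormedAddGroup E] {f : E → E} {K : ℝ}
    (hK : 0 ≤ K) (hf : ∀ x, ‖f x‖ ≤ K * ‖x‖) (n : ℕ) (x : E) : ‖f^[n] x‖ ≤ K ^ n * ‖x‖ := by
  induction n with
  | zero => simp
  | succ n ih =>
    rw [Function.iterate_succ_apply', pow_succ', mul_assoc]
    exact (hf _).trans (mul_le_mul_of_nonneg_left ih hK)

theorem spectrum_subset_zero_of_factorial_mul_norm_pow_le {𝕜 A : Type*}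
    [NontriviallyNormedField 𝕜] [NormedRing A] [NormedAlgebra 𝕜 A] [CompleteSpace A]
    {a : A} {C : ℝ}
    (h : ∀ᶠ n in atTop, n ! * ‖a ^ n‖ ≤ C ^ n) : spectrum 𝕜 a ⊆ {0} := by
  intro k hk
  by_contra hk0
  have hk_pos : 0 < ‖k‖ := norm_pos_iff.mpr hk0
  have h_small : ∀ᶠ n : ℕ in atTop, (C / ‖k‖) ^ n / n ! * ‖(1 : A)‖ < 1 := by
    have := (FloorSemiring.tendsto_pow_div_factorial_atTop (C / ‖k‖)).mul_const ‖(1 : A)‖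
    rw [zero_mul] at this
    exact this.eventually (gt_mem_nhds one_pos)
  obtain ⟨n, hn, hn_small⟩ := (h.and h_small).exists
  have h_spec : ‖k‖ ^ n ≤ ‖a ^ n‖ * ‖(1 : A)‖ := by
    simpa using spectrum.norm_le_norm_mul_of_mem (spectrum.pow_mem_pow a n hk)
  have hfac : (0 : ℝ) < n ! := by exact_mod_cast Nat.factorial_pos n
  rw [div_pow, div_div, div_mul_eq_mul_div, div_lt_one (by positivity)] at hn_small
  nlinarith [mul_le_mul_of_nonneg_left h_spec hfac.le, norm_nonneg (1 : A)]

/-- Rosenblum–Halmos lemma: if `X` commutes with `T` and lies in the range of the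
inner derivation `Z ↦ TZ - ZT`, then `X` is quasinilpotent: `σ(X) = {0}`. -/
theorem rosenblum_halmos
    {A : Type*} [NormedRing A] [NormedAlgebra ℂ A] [CompleteSpace A] [Nontrivial A]
    (T X Z : A) (hcomm : T * X = X * T) (hran : X = T * Z - Z * T) :
    spectrum ℂ X = {0} := by
  set D : A →+ A := AddMonoidHom.mulLeft T - AddMonoidHom.mulRight T
  have hD_apply (a : A) : D a = T * a - a * T := rfl
  have hD : ∀ a b, D (a * b) = D a * b + a * D b := by
    intro a b; simp only [hD_apply]; noncomm_ring
  have hDZ : D Z = X := hran.symm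
  have hDX : D X = 0 := by rw [hD_apply, hcomm, sub_self]
  have hD_norm (a : A) : ‖D a‖ ≤ 2 * ‖T‖ * ‖a‖ := by
    rw [hD_apply]
    linarith [norm_sub_le (T * a) (a * T), norm_mul_le T a, norm_mul_le a T]
  have h_bound : ∀ᶠ n in atTop, n ! * ‖X ^ n‖ ≤ (2 * ‖T‖ * ‖Z‖) ^ n := by
    filter_upwards [eventually_gt_atTop 0] with n hn
    calc (n ! : ℝ) * ‖X ^ n‖ = ‖D^[n] (Z ^ n)‖ := by
          rw [iterate_pow_self_of_leibniz hD (hDZ ▸ hDX), hDZ, ← Nat.cast_smul_eq_nsmul ℂ,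
            norm_smul]
          simp
      _ ≤ (2 * ‖T‖) ^ n * ‖Z ^ n‖ := norm_iterate_le_of_norm_le (by positivity) hD_norm n _
      _ ≤ (2 * ‖T‖) ^ n * ‖Z‖ ^ n := by gcongr; exact norm_pow_le' Z hn
      _ = (2 * ‖T‖ * ‖Z‖) ^ n := (mul_pow _ _ n).symm
  exact (spectrum.nonempty X).subset_singleton_iff.mp
    (spectrum_subset_zero_of_factorial_mul_norm_pow_le h_bound)
end

section
/- Let A be a unital C*-algebra, and let t, x ∈ A with tx = xt and x = tz - zt for some z ∈ A. If x is self-adjoint and positive (x ≥ 0), then x = 0. -/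
/-!
This is the Kleinecke–Shirokov argument. Write `δ a = t * a - a * t`, so `x = δ z` and `δ x = 0`.
Leibniz' rule gives `δ^(n+1) (z * a) = z * δ^(n+1) a + (n+1) • x * δ^n a`, hence
`δ^n (z^n) = n! • x^n`, and as `‖δ‖ ≤ 2‖t‖` this yields `n! ‖x^n‖ ≤ (2‖t‖‖z‖)^n`.
For self-adjoint `x` the C*-identity gives `‖x^(2^k)‖ = ‖x‖^(2^k)`, so
`‖x‖^m ≤ C^m / m!` for arbitrarily large `m`, which forces `‖x‖ = 0`.
-/

open Filter
open scoped Nat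

section Ring

variable {A : Type*} [Ring A]

def innerDerivation (t : A) : Module.End ℤ A :=
  LinearMap.mulLeft ℤ t - LinearMap.mulRight ℤ t

@[simp]
theorem innerDerivation_apply (t a : A) : innerDerivation t a = t * a - a * t := rfl

theorem innerDerivation_mul (t a b : A) :
    innerDerivation t (a * b) = innerDerivation t a * b + a * innerDerivation t b := by
  simp only [innerDerivation_apply]; noncomm_ring

theorem pow_innerDerivation_mul_of_commute {t x : A} (hx : Commute t x) (n : ℕ) (a : A) :
    (innerDerivation t ^ n) (x * a) = x * (innerDerivation t ^ n) a := by
  induction n with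
  | zero => rfl
  | succ n ih =>
    rw [pow_succ', Module.End.mul_apply, ih, innerDerivation_mul, innerDerivation_apply t x,
      hx.eq, sub_self, zero_mul, zero_add, ← Module.End.mul_apply, ← pow_succ']

theorem pow_succ_innerDerivation_mul {t z : A} (hz : Commute t (innerDerivation t z)) (n : ℕ)
    (a : A) :
    (innerDerivation t ^ (n + 1)) (z * a) =
      z * (innerDerivation t ^ (n + 1)) a +
        (n + 1) • (innerDerivation t z * (innerDerivation t ^ n) a) := by
  induction n generalizing a with
  | zero => simp only [pow_one, innerDerivation_mul, pow_zero, zero_add, one_smul,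
      Module.End.one_apply, add_comm]
  | succ n ih =>
    rw [pow_succ, Module.End.mul_apply, innerDerivation_mul, map_add, ih,
      pow_innerDerivation_mul_of_commute hz, ← Module.End.mul_apply, ← pow_succ,
      ← Module.End.mul_apply, ← pow_succ, succ_nsmul _ (n + 1)]
    abel

theorem pow_succ_innerDerivation_pow_eq_zero {t z : A} (hz : Commute t (innerDerivation t z))
    (n : ℕ) : (innerDerivation t ^ (n + 1)) (z ^ n) = 0 := by
  induction n with
  | zero => simp
  | succ n ih =>
    rw [pow_succ' z, pow_succ_innerDerivation_mul hz, pow_succ' _ (n + 1),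
      Module.End.mul_apply, ih, map_zero, mul_zero, mul_zero, smul_zero, add_zero]

theorem pow_innerDerivation_pow_self {t z : A} (hz : Commute t (innerDerivation t z)) (n : ℕ) :
    (innerDerivation t ^ n) (z ^ n) = n ! • innerDerivation t z ^ n := by
  induction n with
  | zero => simp
  | succ n ih =>
    rw [pow_succ' z, pow_succ_innerDerivation_mul hz, pow_succ_innerDerivation_pow_eq_zero hz,
      ih, mul_zero, zero_add, mul_smul_comm, smul_smul, ← pow_succ', Nat.factorial_succ]

end Ring

section NormedRing

variable {A : Type*} [NormedRing A]

theorem norm_innerDerivation_le (t a : A) : ‖innerDerivation t a‖ ≤ 2 * ‖t‖ * ‖a‖ :=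
  calc ‖t * a - a * t‖ ≤ ‖t * a‖ + ‖a * t‖ := norm_sub_le _ _
    _ ≤ ‖t‖ * ‖a‖ + ‖a‖ * ‖t‖ := add_le_add (norm_mul_le _ _) (norm_mul_le _ _)
    _ = 2 * ‖t‖ * ‖a‖ := by ring

theorem norm_pow_innerDerivation_le (t : A) (n : ℕ) (a : A) :
    ‖(innerDerivation t ^ n) a‖ ≤ (2 * ‖t‖) ^ n * ‖a‖ := by
  induction n with
  | zero => simp
  | succ n ih =>
    rw [pow_succ', Module.End.mul_apply]
    calc ‖innerDerivation t ((innerDerivation t ^ n) a)‖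
        ≤ 2 * ‖t‖ * ‖(innerDerivation t ^ n) a‖ := norm_innerDerivation_le _ _
      _ ≤ 2 * ‖t‖ * ((2 * ‖t‖) ^ n * ‖a‖) := by gcongr
      _ = (2 * ‖t‖) ^ (n + 1) * ‖a‖ := by ring

theorem factorial_mul_norm_pow_innerDerivation_le (𝕜 : Type*) [RCLike 𝕜] [NormedSpace 𝕜 A]
    {t z : A} (hz : Commute t (innerDerivation t z)) {n : ℕ} (hn : 0 < n) :
    n ! * ‖innerDerivation t z ^ n‖ ≤ (2 * ‖t‖ * ‖z‖) ^ n :=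
  -- the scalars `𝕜` make `‖n • a‖ = n * ‖a‖`, which fails in a general normed ring
  calc n ! * ‖innerDerivation t z ^ n‖ = ‖(innerDerivation t ^ n) (z ^ n)‖ := by
        rw [pow_innerDerivation_pow_self hz, RCLike.norm_nsmul 𝕜, nsmul_eq_mul]
    _ ≤ (2 * ‖t‖) ^ n * ‖z ^ n‖ := norm_pow_innerDerivation_le t n _
    _ ≤ (2 * ‖t‖) ^ n * ‖z‖ ^ n := by gcongr; exact norm_pow_le' z hn
    _ = (2 * ‖t‖ * ‖z‖) ^ n := by ring

end NormedRing

theorem eq_zero_of_frequently_pow_mul_factorial_le {r C : ℝ} (hr : 0 ≤ r)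
    (h : ∃ᶠ n in atTop, r ^ n * n ! ≤ C ^ n) : r = 0 := by
  by_contra hr0
  have hr : 0 < r := hr.lt_of_ne' hr0
  have hsmall : ∀ᶠ n in atTop, (C / r) ^ n / n ! < 1 :=
    (FloorSemiring.tendsto_pow_div_factorial_atTop (C / r)).eventually (gt_mem_nhds one_pos)
  obtain ⟨n, hle, hlt⟩ := (h.and_eventually hsmall).exists
  rw [div_pow, div_div, div_lt_one (by positivity)] at hlt
  linarith

theorem IsSelfAdjoint.eq_zero_of_factorial_mul_norm_pow_le {A : Type*} [NormedRing A]
    [StarRing A] [CStarRing A] {a : A} (ha : IsSelfAdjoint a) {C : ℝ}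
    (h : ∀ n : ℕ, 0 < n → n ! * ‖a ^ n‖ ≤ C ^ n) : a = 0 := by
  refine norm_eq_zero.mp (eq_zero_of_frequently_pow_mul_factorial_le (C := C) (norm_nonneg a) ?_)
  refine frequently_atTop.mpr fun k => ⟨2 ^ k, Nat.lt_two_pow_self.le, ?_⟩
  rw [← ha.norm_pow_two_pow, mul_comm]
  exact h _ (Nat.two_pow_pos k)

theorem positive_commutator_range_eq_zero_general
    {A : Type*} [NormedRing A] [StarRing A] [CStarRing A] [NormedAlgebra ℂ A]
    (t x z : A) (hcomm : t * x = x * t) (hran : x = t * z - z * t)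
    (hsa : IsSelfAdjoint x) :
    x = 0 := by
  obtain rfl : x = innerDerivation t z := hran
  exact hsa.eq_zero_of_factorial_mul_norm_pow_le fun _ hn =>
    factorial_mul_norm_pow_innerDerivation_le ℂ hcomm hn

/-- In a unital C*-algebra, a positive element commuting with `t` and lying in the
range of the inner derivation `a ↦ ta - at` is zero. -/
theorem positive_commutator_range_eq_zero
    {A : Type*} [NormedRing A] [StarRing A] [CStarRing A] [NormedAlgebra ℂ A]
    [CompleteSpace A] [StarModule ℂ A] [PartialOrder A] [StarOrderedRing A]
    (t x z : A) (hcomm : t * x = x * t) (hran : x = t * z - z * t)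
    (hsa : IsSelfAdjoint x) (hpos : 0 ≤ x) :
    x = 0 :=
  positive_commutator_range_eq_zero_general t x z hcomm hran hsa
end

section
/- Let T be an essentially normal operator on a Hilbert space H that is upper triangular 2×2 with respect to an orthogonal decomposition H = H1 ⊕ H2, say T = [[A, B],[0, C]], with AB = BC. Suppose in the Calkin algebra Q, the only element y with Q(C)·y = y·Q(A) that also lies in the range of the map z ↦ Q(C)z - zQ(A) is y = 0 in the positive case (equivalently, (A, C) satisfies Property (H) modulo compacts). Then B is a compact operator and A, C are essentially normal. -/
/-!
Let `Q` be the quotient map onto the Calkin algebra. Reading `Q(T* T - T T*) = 0` block by block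
gives `Q(B*) Q(A) = Q(C) Q(B*)` (entry `(2,1)`) and `Q(B* B) = Q(C) Q(C*) - Q(C*) Q(C)` (entry
`(2,2)`). With `AB = BC`, the element `y = Q(B* B B*)` then satisfies `Q(C) y = y Q(A)` and
`y = Q(C) z - z Q(A)` for `z = Q(C* B*)`, so Property (H) gives `y = 0`. The C*-identity turns
`Q(B* B B*) = 0` into `Q(B) = 0`, and then the diagonal entries `(1,1)` and `(2,2)` say that
`Q(A)` and `Q(C)` are normal.
-/

open ContinuousLinearMap WithLp

theorem TotallyBounded.image_of_forall_dist_lt {α β γ : Type*} [PseudoMetricSpace β]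
    [PseudoMetricSpace γ] {f : α → β} {g : α → γ} {s : Set α} (hg : TotallyBounded (g '' s))
    (hfg : ∀ ε > 0, ∃ δ > 0, ∀ x ∈ s, ∀ y ∈ s, dist (g x) (g y) < δ → dist (f x) (f y) < ε) :
    TotallyBounded (f '' s) := by
  refine Metric.totallyBounded_iff.mpr fun ε hε ↦ ?_
  obtain ⟨δ, hδ, hδε⟩ := hfg ε hε
  obtain ⟨t, hts, htfin, hcover⟩ := Set.exists_subset_image_finite_and.mp
    (Metric.finite_approx_of_totallyBounded hg δ hδ)
  refine ⟨f '' t, htfin.image f, ?_⟩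
  rintro _ ⟨x, hx, rfl⟩
  obtain ⟨_, ⟨y, hy, rfl⟩, hxy⟩ := Set.mem_iUnion₂.mp (hcover ⟨x, hx, rfl⟩)
  exact Set.mem_biUnion (Set.mem_image_of_mem f hy) (hδε x hx y (hts hy) hxy)

theorem IsCompactOperator.of_prodMk {𝕜 E F G : Type*} [NontriviallyNormedField 𝕜]
    [NormedAddCommGroup E] [NormedSpace 𝕜 E] [NormedAddCommGroup F] [NormedSpace 𝕜 F]
    [NormedAddCommGroup G] [NormedSpace 𝕜 G] {f : E →L[𝕜] F} {g : E →L[𝕜] G}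
    (h : IsCompactOperator fun x ↦ (f x, g x)) : IsCompactOperator f ∧ IsCompactOperator g :=
  ⟨h.clm_comp (fst 𝕜 F G), h.clm_comp (snd 𝕜 F G)⟩

section Blocks

variable {𝕜 E F : Type*} [NontriviallyNormedField 𝕜] {p : ENNReal}
  [NormedAddCommGroup E] [NormedSpace 𝕜 E] [NormedAddCommGroup F] [NormedSpace 𝕜 F]

theorem IsCompactOperator.ofLp_apply_toLp_inl {K : WithLp p (E × F) →L[𝕜] WithLp p (E × F)}
    (hK : IsCompactOperator K) : IsCompactOperator fun x : E ↦ ofLp (K (toLp p (x, 0))) :=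
  (hK.comp_clm
      (((prodContinuousLinearEquiv p 𝕜 E F).symm : E × F →L[𝕜] WithLp p (E × F)) ∘L
        inl 𝕜 E F)).clm_comp
    (prodContinuousLinearEquiv p 𝕜 E F : WithLp p (E × F) →L[𝕜] E × F)

theorem IsCompactOperator.ofLp_apply_toLp_inr {K : WithLp p (E × F) →L[𝕜] WithLp p (E × F)}
    (hK : IsCompactOperator K) : IsCompactOperator fun x : F ↦ ofLp (K (toLp p (0, x))) :=
  (hK.comp_clm
      (((prodContinuousLinearEquiv p 𝕜 E F).symm : E × F →L[𝕜] WithLp p (E × F)) ∘L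
        inr 𝕜 E F)).clm_comp
    (prodContinuousLinearEquiv p 𝕜 E F : WithLp p (E × F) →L[𝕜] E × F)

end Blocks

section Hilbert

variable {𝕜 E F : Type*} [RCLike 𝕜]
  [NormedAddCommGroup E] [InnerProductSpace 𝕜 E] [CompleteSpace E]
  [NormedAddCommGroup F] [InnerProductSpace 𝕜 F] [CompleteSpace F]

theorem norm_apply_sq_le_norm_adjoint_comp_self_apply_mul (R : E →L[𝕜] F) (v : E) :
    ‖R v‖ ^ 2 ≤ ‖(adjoint R ∘L R) v‖ * ‖v‖ := by
  rw [apply_norm_sq_eq_inner_adjoint_left]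
  exact (RCLike.re_le_norm _).trans (norm_inner_le_norm _ _)

theorem IsCompactOperator.of_adjoint_comp_self {R : E →L[𝕜] F}
    (h : IsCompactOperator (adjoint R ∘L R)) : IsCompactOperator R := by
  have hG : TotallyBounded ((adjoint R ∘L R) '' Metric.ball 0 1) :=
    (h.isCompact_closure_image_ball 1).totallyBounded.subset subset_closure
  refine (isCompactOperator_iff_isCompact_closure_image_ball (R : E →ₗ[𝕜] F) one_pos).mpr ?_
  refine (hG.image_of_forall_dist_lt fun ε hε ↦ ⟨ε ^ 2 / 2, by positivity, ?_⟩).closure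
    |>.isCompact_of_isClosed isClosed_closure
  intro x hx y hy hxy
  have hxy₂ : ‖x - y‖ ≤ 2 := by
    have := norm_sub_le x y
    simp only [Metric.mem_ball, dist_zero_right] at hx hy
    linarith
  rw [dist_eq_norm, ← map_sub] at hxy
  rw [coe_coe, dist_eq_norm, ← map_sub]
  refine lt_of_pow_lt_pow_left₀ 2 hε.le ?_
  calc ‖R (x - y)‖ ^ 2 ≤ ‖(adjoint R ∘L R) (x - y)‖ * ‖x - y‖ :=
        norm_apply_sq_le_norm_adjoint_comp_self_apply_mul R (x - y)
    _ ≤ ‖(adjoint R ∘L R) (x - y)‖ * 2 := by gcongr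
    _ < ε ^ 2 / 2 * 2 := by gcongr
    _ = ε ^ 2 := by ring

theorem IsCompactOperator.of_adjoint_comp_comp_adjoint {B : F →L[𝕜] E}
    (h : IsCompactOperator (adjoint B ∘L B ∘L adjoint B)) : IsCompactOperator B := by
  have hBB : IsCompactOperator (B ∘L adjoint B) := by
    refine .of_adjoint_comp_self ?_
    rw [adjoint_comp, adjoint_adjoint, comp_assoc]
    exact h.clm_comp B
  have hB' : IsCompactOperator (adjoint B) :=
    .of_adjoint_comp_self (by rwa [adjoint_adjoint])
  exact .of_adjoint_comp_self (hB'.comp_clm B)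

/-- Property (H) modulo the compacts: in the Calkin algebra, an element of the range of
`z ↦ Q(C) z - z Q(A)` that also lies in its kernel vanishes. -/
def HasPropertyHModCompacts (A : E →L[𝕜] E) (C : F →L[𝕜] F) : Prop :=
  ∀ y : E →L[𝕜] F, IsCompactOperator (C ∘L y - y ∘L A) →
    (∃ z : E →L[𝕜] F, IsCompactOperator (y - (C ∘L z - z ∘L A))) → IsCompactOperator y

theorem isCompactOperator_of_hasPropertyHModCompacts {A : E →L[𝕜] E} {C : F →L[𝕜] F}
    {B : F →L[𝕜] E} (hAB : A ∘L B = B ∘L C)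
    (h₁ : IsCompactOperator (adjoint B ∘L A - C ∘L adjoint B))
    (h₂ : IsCompactOperator (adjoint B ∘L B + adjoint C ∘L C - C ∘L adjoint C))
    (hH : HasPropertyHModCompacts A C) : IsCompactOperator B := by
  set K₁ := adjoint B ∘L A - C ∘L adjoint B
  set K₂ := adjoint B ∘L B + adjoint C ∘L C - C ∘L adjoint C
  set y := adjoint B ∘L B ∘L adjoint B
  have hy_ker : C ∘L y - y ∘L A = -(K₁ ∘L (B ∘L adjoint B) + (adjoint B ∘L B) ∘L K₁) := by
    ext x
    have hABx := congr($hAB (adjoint B x))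
    simp only [y, K₁, comp_apply, sub_apply, add_apply, neg_apply, map_sub] at hABx ⊢
    rw [hABx]
    abel
  have hy_range : y - (C ∘L (adjoint C ∘L adjoint B) - (adjoint C ∘L adjoint B) ∘L A) =
      K₂ ∘L adjoint B + adjoint C ∘L K₁ := by
    ext x
    simp only [y, K₁, K₂, comp_apply, sub_apply, add_apply, map_sub]
    abel
  refine .of_adjoint_comp_comp_adjoint (hH y ?_ ⟨adjoint C ∘L adjoint B, ?_⟩)
  · rw [hy_ker, FunLike.coe_neg]
    exact ((h₁.comp_clm (B ∘L adjoint B)).add (h₁.clm_comp (adjoint B ∘L B))).neg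
  · rw [hy_range]
    exact (h₂.comp_clm _).add (h₁.clm_comp (adjoint C))

end Hilbert

section UpperTriangular

variable {𝕜 H1 H2 : Type*} [RCLike 𝕜]
  [NormedAddCommGroup H1] [InnerProductSpace 𝕜 H1] [CompleteSpace H1]
  [NormedAddCommGroup H2] [InnerProductSpace 𝕜 H2] [CompleteSpace H2]
  {A : H1 →L[𝕜] H1} {C : H2 →L[𝕜] H2} {B : H2 →L[𝕜] H1}
  {T : WithLp 2 (H1 × H2) →L[𝕜] WithLp 2 (H1 × H2)}

theorem adjoint_apply_of_upperTriangular
    (hT : ∀ v, ofLp (T v) = (A (ofLp v).1 + B (ofLp v).2, C (ofLp v).2))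
    (v : WithLp 2 (H1 × H2)) :
    ofLp (adjoint T v) = (adjoint A (ofLp v).1, adjoint B (ofLp v).1 + adjoint C (ofLp v).2) := by
  suffices adjoint T v = toLp 2 (adjoint A (ofLp v).1, adjoint B (ofLp v).1 + adjoint C (ofLp v).2)
    by rw [this]
  refine ext_inner_left 𝕜 fun w ↦ ?_
  simp only [adjoint_inner_right, prod_inner_apply, hT, inner_add_left, inner_add_right]
  ring

theorem selfCommutator_apply_toLp_inl
    (hT : ∀ v, ofLp (T v) = (A (ofLp v).1 + B (ofLp v).2, C (ofLp v).2)) (x : H1) :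
    ofLp ((adjoint T ∘L T - T ∘L adjoint T) (toLp 2 (x, 0))) =
      ((adjoint A ∘L A - A ∘L adjoint A - B ∘L adjoint B) x,
        (adjoint B ∘L A - C ∘L adjoint B) x) := by
  simp [hT, adjoint_apply_of_upperTriangular hT, sub_add_eq_sub_sub]

theorem selfCommutator_apply_toLp_inr
    (hT : ∀ v, ofLp (T v) = (A (ofLp v).1 + B (ofLp v).2, C (ofLp v).2)) (x : H2) :
    ofLp ((adjoint T ∘L T - T ∘L adjoint T) (toLp 2 (0, x))) =
      ((adjoint A ∘L B - B ∘L adjoint C) x,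
        (adjoint B ∘L B + adjoint C ∘L C - C ∘L adjoint C) x) := by
  simp [hT, adjoint_apply_of_upperTriangular hT]

end UpperTriangular

/-- For an essentially normal upper-triangular `2×2` operator `T = [[A,B],[0,C]]` with
`AB = BC`, assuming Property (H) modulo the compacts for the pair `(A, C)`, the corner
`B` is compact and the diagonal entries `A`, `C` are essentially normal. -/
theorem essentiallyNormal_upperTriangular_corner_compact
    {H1 H2 : Type*} [NormedAddCommGroup H1] [InnerProductSpace ℂ H1] [CompleteSpace H1]
    [NormedAddCommGroup H2] [InnerProductSpace ℂ H2] [CompleteSpace H2]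
    (A : H1 →L[ℂ] H1) (C : H2 →L[ℂ] H2) (B : H2 →L[ℂ] H1)
    (T : WithLp 2 (H1 × H2) →L[ℂ] WithLp 2 (H1 × H2))
    (hT : ∀ v : WithLp 2 (H1 × H2),
      WithLp.equiv 2 (H1 × H2) (T v) =
        (A (WithLp.equiv 2 (H1 × H2) v).1 + B (WithLp.equiv 2 (H1 × H2) v).2,
          C (WithLp.equiv 2 (H1 × H2) v).2))
    (hAB : A ∘L B = B ∘L C)
    (hEN : IsCompactOperator ⇑(adjoint T ∘L T - T ∘L adjoint T))
    (hH : ∀ y : H1 →L[ℂ] H2,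
      IsCompactOperator ⇑(C ∘L y - y ∘L A) →
      (∃ z : H1 →L[ℂ] H2, IsCompactOperator ⇑(y - (C ∘L z - z ∘L A))) →
      IsCompactOperator ⇑y) :
    IsCompactOperator ⇑B ∧
      IsCompactOperator ⇑(adjoint A ∘L A - A ∘L adjoint A) ∧
      IsCompactOperator ⇑(adjoint C ∘L C - C ∘L adjoint C) := by
  obtain ⟨h₁₁, h₂₁⟩ := IsCompactOperator.of_prodMk <| by
    simpa only [selfCommutator_apply_toLp_inl hT] using hEN.ofLp_apply_toLp_inl
  obtain ⟨-, h₂₂⟩ := IsCompactOperator.of_prodMk <| by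
    simpa only [selfCommutator_apply_toLp_inr hT] using hEN.ofLp_apply_toLp_inr
  have hB : IsCompactOperator B := isCompactOperator_of_hasPropertyHModCompacts hAB h₂₁ h₂₂ hH
  refine ⟨hB, ?_, ?_⟩
  · rw [← sub_add_cancel (adjoint A ∘L A - A ∘L adjoint A) (B ∘L adjoint B)]
    exact h₁₁.add (hB.comp_clm (adjoint B))
  · rw [show adjoint C ∘L C - C ∘L adjoint C =
      (adjoint B ∘L B + adjoint C ∘L C - C ∘L adjoint C) - adjoint B ∘L B by abel]
    exact h₂₂.sub (hB.clm_comp (adjoint B))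
end

section
/- Let T1, T2 be weighted backward shifts with weights (a_k), (b_k) respectively (T_i e_{k+1} = w_k e_k, T_i e_1 = 0), all weights nonzero. Suppose bounded operators X = (x_{k,j}) and Y = (y_{k,j}) satisfy T1 Y = Y T2, Y upper triangular, and Y = T1 X - X T2. Then x_{k,j} = 0 for k - j > 1 and the subdiagonal entries of X satisfy a_k x_{k+1,k} - x_{k,k-1} b_{k-1} = y_{k,k} for all k, whence x_{k+1,k} = (k · y_{1,1} · ∏_{ℓ=1}^{k-1} b_ℓ) / (∏_{ℓ=1}^{k} a_ℓ) when y_{1,1} is normalized appropriately. -/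
open scoped InnerProductSpace
open Finset

/-!
Testing `T1 Y = Y T2` and `Y = T1 X - X T2` against basis vectors turns both into scalar
identities between matrix entries, since `⟪e k, T v⟫ = w k * ⟪e (k + 1), v⟫` for a weighted
backward shift. Column by column, `y_{k,0} = a_k x_{k+1,0}` and
`y_{k,j+1} = a_k x_{k+1,j+1} - x_{k,j} b_j`, so upper triangularity of `Y` kills the entries
of `X` below the subdiagonal, while the intertwining relation forces
`y_{k,k} ∏_{ℓ<k} a_ℓ = y_{0,0} ∏_{ℓ<k} b_ℓ`. Feeding this into the subdiagonal recursion,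
every step contributes the same amount `y_{0,0} ∏ b`, which is where the factor `k + 1`
comes from.
-/

section Recursion

variable {R : Type*} [CommRing R] (a b d x : ℕ → R)

theorem mul_prod_range_eq_of_mul_succ (h : ∀ k, a k * d (k + 1) = b k * d k) (k : ℕ) :
    d k * ∏ ℓ ∈ range k, a ℓ = d 0 * ∏ ℓ ∈ range k, b ℓ := by
  induction k with
  | zero => simp
  | succ k ih =>
    rw [prod_range_succ, prod_range_succ]
    linear_combination (∏ ℓ ∈ range k, a ℓ) * h k + b k * ih

theorem mul_prod_range_eq_of_sub_eq
    (hd : ∀ k, d k * ∏ ℓ ∈ range k, a ℓ = d 0 * ∏ ℓ ∈ range k, b ℓ)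
    (h0 : a 0 * x 0 = d 0)
    (hrec : ∀ k, a (k + 1) * x (k + 1) - x k * b k = d (k + 1)) (k : ℕ) :
    x k * ∏ ℓ ∈ range (k + 1), a ℓ = (k + 1) * d 0 * ∏ ℓ ∈ range k, b ℓ := by
  induction k with
  | zero => simpa [mul_comm] using h0
  | succ k ih =>
    have hd' := hd (k + 1)
    rw [prod_range_succ b k] at hd'
    rw [prod_range_succ a (k + 1), prod_range_succ b k]
    push_cast
    linear_combination (∏ ℓ ∈ range (k + 1), a ℓ) * hrec k + hd' + b k * ih

end Recursion

section WeightedShift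

variable {𝕜 H : Type*} [RCLike 𝕜] [NormedAddCommGroup H] [InnerProductSpace 𝕜 H]

def IsWeightedBackwardShift (e : HilbertBasis ℕ 𝕜 H) (w : ℕ → 𝕜) (T : H →L[𝕜] H) :
    Prop :=
  T (e 0) = 0 ∧ ∀ k, T (e (k + 1)) = w k • e k

variable {e : HilbertBasis ℕ 𝕜 H} {w w₁ w₂ : ℕ → 𝕜} {T T₁ T₂ : H →L[𝕜] H}

theorem IsWeightedBackwardShift.inner_apply (hT : IsWeightedBackwardShift e w T)
    (k : ℕ) (v : H) : ⟪e k, T v⟫_𝕜 = w k * ⟪e (k + 1), v⟫_𝕜 := by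
  suffices (innerSL 𝕜 (e k)).comp T = w k • innerSL 𝕜 (e (k + 1)) from
    congrArg (fun L : H →L[𝕜] 𝕜 => L v) this
  refine ContinuousLinearMap.ext_on
    (Submodule.dense_iff_topologicalClosure_eq_top.mpr e.dense_span) ?_
  rintro _ ⟨m, rfl⟩
  simp only [ContinuousLinearMap.comp_apply, smul_apply, innerSL_apply_apply,
    smul_eq_mul]
  cases m with
  | zero => simp [hT.1, orthonormal_iff_ite.mp e.orthonormal]
  | succ m =>
    rw [hT.2 m, inner_smul_right, orthonormal_iff_ite.mp e.orthonormal,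
      orthonormal_iff_ite.mp e.orthonormal]
    by_cases hm : k = m <;> simp [hm]

theorem inner_commutator_apply_zero (hT₁ : IsWeightedBackwardShift e w₁ T₁)
    (hT₂ : IsWeightedBackwardShift e w₂ T₂) (X : H →L[𝕜] H) (k : ℕ) :
    ⟪e k, (T₁ ∘L X - X ∘L T₂) (e 0)⟫_𝕜 = w₁ k * ⟪e (k + 1), X (e 0)⟫_𝕜 := by
  simp [hT₁.inner_apply, hT₂.1]

theorem inner_commutator_apply_succ (hT₁ : IsWeightedBackwardShift e w₁ T₁)
    (hT₂ : IsWeightedBackwardShift e w₂ T₂) (X : H →L[𝕜] H) (k j : ℕ) :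
    ⟪e k, (T₁ ∘L X - X ∘L T₂) (e (j + 1))⟫_𝕜 =
      w₁ k * ⟪e (k + 1), X (e (j + 1))⟫_𝕜 - ⟪e k, X (e j)⟫_𝕜 * w₂ j := by
  simp only [sub_apply, ContinuousLinearMap.comp_apply, inner_sub_right,
    hT₁.inner_apply, hT₂.2 j, map_smul, inner_smul_right, mul_comm]

theorem inner_diag_succ_of_comp_eq (hT₁ : IsWeightedBackwardShift e w₁ T₁)
    (hT₂ : IsWeightedBackwardShift e w₂ T₂) {Y : H →L[𝕜] H} (hY : T₁ ∘L Y = Y ∘L T₂)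
    (k : ℕ) : w₁ k * ⟪e (k + 1), Y (e (k + 1))⟫_𝕜 = w₂ k * ⟪e k, Y (e k)⟫_𝕜 := by
  have h := congrArg (fun Z : H →L[𝕜] H => ⟪e k, Z (e (k + 1))⟫_𝕜) hY
  simpa only [ContinuousLinearMap.comp_apply, hT₁.inner_apply, hT₂.2 k, map_smul,
    inner_smul_right] using h

theorem inner_eq_zero_of_commutator_upperTriangular
    (hT₁ : IsWeightedBackwardShift e w₁ T₁) (hT₂ : IsWeightedBackwardShift e w₂ T₂)
    (hw₁ : ∀ k, w₁ k ≠ 0) {X : H →L[𝕜] H}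
    (hupper : ∀ k j, j < k → ⟪e k, (T₁ ∘L X - X ∘L T₂) (e j)⟫_𝕜 = 0) {k j : ℕ}
    (hjk : j + 1 < k) : ⟪e k, X (e j)⟫_𝕜 = 0 := by
  induction j generalizing k with
  | zero =>
    obtain ⟨m, rfl⟩ : ∃ m, k = m + 2 := ⟨k - 2, by omega⟩
    have h := inner_commutator_apply_zero hT₁ hT₂ X (m + 1)
    rw [hupper (m + 1) 0 (by omega), eq_comm, mul_eq_zero] at h
    exact h.resolve_left (hw₁ _)
  | succ j ih =>
    obtain ⟨m, rfl⟩ : ∃ m, k = m + 1 := ⟨k - 1, by omega⟩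
    have h := inner_commutator_apply_succ hT₁ hT₂ X m j
    rw [hupper m (j + 1) (by omega), ih (by omega), zero_mul, sub_zero, eq_comm,
      mul_eq_zero] at h
    exact h.resolve_left (hw₁ _)

end WeightedShift

theorem commutator_intertwiner_subdiagonal_general
    {H : Type*} [NormedAddCommGroup H] [InnerProductSpace ℂ H]
    (e : HilbertBasis ℕ ℂ H) (a b : ℕ → ℝ)
    (ha : ∀ k, a k ≠ 0)
    (T1 T2 X Y : H →L[ℂ] H)
    (hT1z : T1 (e 0) = 0) (hT1 : ∀ k : ℕ, T1 (e (k + 1)) = (a k : ℂ) • e k)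
    (hT2z : T2 (e 0) = 0) (hT2 : ∀ k : ℕ, T2 (e (k + 1)) = (b k : ℂ) • e k)
    (hYupper : ∀ k j : ℕ, j < k → ⟪e k, Y (e j)⟫_ℂ = 0)
    (hint : T1 ∘L Y = Y ∘L T2)
    (hcomm : Y = T1 ∘L X - X ∘L T2) :
    (∀ k j : ℕ, j + 1 < k → ⟪e k, X (e j)⟫_ℂ = 0) ∧
      ((a 0 : ℂ) * ⟪e 1, X (e 0)⟫_ℂ = ⟪e 0, Y (e 0)⟫_ℂ) ∧
      (∀ k : ℕ, (a (k + 1) : ℂ) * ⟪e (k + 2), X (e (k + 1))⟫_ℂ -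
          ⟪e (k + 1), X (e k)⟫_ℂ * (b k : ℂ) = ⟪e (k + 1), Y (e (k + 1))⟫_ℂ) ∧
      (∀ k : ℕ, ⟪e (k + 1), X (e k)⟫_ℂ =
        (((k : ℂ) + 1) * ⟪e 0, Y (e 0)⟫_ℂ * ∏ ℓ ∈ range k, (b ℓ : ℂ)) /
          ∏ ℓ ∈ range (k + 1), (a ℓ : ℂ)) := by
  have hS1 : IsWeightedBackwardShift e (fun k => (a k : ℂ)) T1 := ⟨hT1z, hT1⟩
  have hS2 : IsWeightedBackwardShift e (fun k => (b k : ℂ)) T2 := ⟨hT2z, hT2⟩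
  have hw1 (k : ℕ) : (a k : ℂ) ≠ 0 := Complex.ofReal_ne_zero.mpr (ha k)
  have hdiag := mul_prod_range_eq_of_mul_succ _ _ (fun k => ⟪e k, Y (e k)⟫_ℂ)
    (inner_diag_succ_of_comp_eq hS1 hS2 hint)
  subst hcomm
  have hx0 := (inner_commutator_apply_zero hS1 hS2 X 0).symm
  have hrec k := (inner_commutator_apply_succ hS1 hS2 X (k + 1) k).symm
  refine ⟨fun k j hjk => inner_eq_zero_of_commutator_upperTriangular hS1 hS2 hw1 hYupper hjk,
    hx0, hrec, fun k => ?_⟩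
  rw [eq_div_iff (prod_ne_zero_iff.mpr fun ℓ _ => hw1 ℓ)]
  exact mul_prod_range_eq_of_sub_eq _ _ _ (fun k => ⟪e (k + 1), X (e k)⟫_ℂ) hdiag hx0 hrec k

/-- If `Y` is an upper-triangular intertwiner of two weighted backward shifts
(`T1 Y = Y T2`) and moreover `Y = T1 X - X T2`, then the matrix of `X` vanishes
strictly below the first subdiagonal, the subdiagonal entries satisfy the recursion
`a_k x_{k+1,k} - x_{k,k-1} b_{k-1} = y_{k,k}`, and hence
`x_{k+1,k} = (k+1) y_{0,0} (∏_{ℓ<k} b_ℓ) / (∏_{ℓ≤k} a_ℓ)`. -/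
theorem commutator_intertwiner_subdiagonal
    {H : Type*} [NormedAddCommGroup H] [InnerProductSpace ℂ H] [CompleteSpace H]
    (e : HilbertBasis ℕ ℂ H) (a b : ℕ → ℝ)
    (ha : ∀ k, a k ≠ 0) (hb : ∀ k, b k ≠ 0)
    (T1 T2 X Y : H →L[ℂ] H)
    (hT1z : T1 (e 0) = 0) (hT1 : ∀ k : ℕ, T1 (e (k + 1)) = (a k : ℂ) • e k)
    (hT2z : T2 (e 0) = 0) (hT2 : ∀ k : ℕ, T2 (e (k + 1)) = (b k : ℂ) • e k)
    (hYupper : ∀ k j : ℕ, j < k → ⟪e k, Y (e j)⟫_ℂ = 0)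
    (hint : T1 ∘L Y = Y ∘L T2)
    (hcomm : Y = T1 ∘L X - X ∘L T2) :
    (∀ k j : ℕ, j + 1 < k → ⟪e k, X (e j)⟫_ℂ = 0) ∧
      ((a 0 : ℂ) * ⟪e 1, X (e 0)⟫_ℂ = ⟪e 0, Y (e 0)⟫_ℂ) ∧
      (∀ k : ℕ, (a (k + 1) : ℂ) * ⟪e (k + 2), X (e (k + 1))⟫_ℂ -
          ⟪e (k + 1), X (e k)⟫_ℂ * (b k : ℂ) = ⟪e (k + 1), Y (e (k + 1))⟫_ℂ) ∧
      (∀ k : ℕ, ⟪e (k + 1), X (e k)⟫_ℂ =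
        (((k : ℂ) + 1) * ⟪e 0, Y (e 0)⟫_ℂ * ∏ ℓ ∈ range k, (b ℓ : ℂ)) /
          ∏ ℓ ∈ range (k + 1), (a ℓ : ℂ)) :=
  commutator_intertwiner_subdiagonal_general e a b ha T1 T2 X Y hT1z hT1 hT2z hT2 hYupper hint hcomm
end

section
/- Let a_k = sqrt(k/(k+λ1-1)) and b_k = sqrt(k/(k+λ2-1)) be the weights of the adjoints of multiplication operators on weighted Bergman spaces, with 0 < λ2 - λ1 < 2. Then the sequence x_{k+1,k} = k · (∏_{ℓ=1}^{k-1} b_ℓ)/(∏_{ℓ=1}^{k} a_ℓ) tends to infinity as k → ∞. -/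
open Finset Filter

/-- Harmonic-type bound for the shifted reciprocal sum. -/
lemma bergman_aux_sum_inv_le (l1 : ℝ) (hl1 : 0 < l1) (m : ℕ) :
    ∑ ℓ ∈ Icc 1 (m + 1), (1 : ℝ) / ((ℓ : ℝ) + l1 - 1) ≤ 1 / l1 + (harmonic m : ℝ) := by
  induction m with
  | zero =>
      simp only [harmonic_zero, Rat.cast_zero, add_zero]
      norm_num
  | succ n ih =>
      rw [Finset.sum_Icc_succ_top (by omega : 1 ≤ n + 1 + 1)]
      have h1 : (1 : ℝ) / ((↑(n + 1 + 1) : ℝ) + l1 - 1) ≤ 1 / ((n : ℝ) + 1) := by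
        apply one_div_le_one_div_of_le (by positivity)
        push_cast; linarith
      have h2 : (harmonic (n + 1) : ℝ) = (harmonic n : ℝ) + 1 / ((n : ℝ) + 1) := by
        push_cast [harmonic_succ]; ring
      rw [h2]; linarith

/-- For Bergman-shift weights `a_k = √(k/(k+λ₁-1))`, `b_k = √(k/(k+λ₂-1))` with
`0 < λ₂ - λ₁ < 2`, the sequence `x_{k+1,k} = k ∏_{ℓ=1}^{k-1} b_ℓ / ∏_{ℓ=1}^{k} a_ℓ`
tends to infinity. -/
theorem bergman_weights_subdiagonal_tendsto_atTop
    (l1 l2 : ℝ) (hl1 : 0 < l1) (hlt : 0 < l2 - l1) (hlt2 : l2 - l1 < 2) :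
    Tendsto
      (fun k : ℕ => (k : ℝ) *
          (∏ ℓ ∈ Icc 1 (k - 1), Real.sqrt ((ℓ : ℝ) / ((ℓ : ℝ) + l2 - 1))) /
          (∏ ℓ ∈ Icc 1 k, Real.sqrt ((ℓ : ℝ) / ((ℓ : ℝ) + l1 - 1))))
      atTop atTop := by
  have hl2 : 0 < l2 := by linarith
  set d : ℝ := l2 - l1 with hd
  set c : ℝ := max 1 (1 / l1) with hc
  have hc1 : 1 ≤ c := le_max_left _ _
  have hc0 : 0 < c := by linarith
  set C : ℝ := d / 2 * (1 / l1 + 1) + Real.log c / 2 with hC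
  set f : ℕ → ℝ := fun k => (k : ℝ) *
      (∏ ℓ ∈ Icc 1 (k - 1), Real.sqrt ((ℓ : ℝ) / ((ℓ : ℝ) + l2 - 1))) /
      (∏ ℓ ∈ Icc 1 k, Real.sqrt ((ℓ : ℝ) / ((ℓ : ℝ) + l1 - 1))) with hf
  -- the minorant
  set g : ℕ → ℝ := fun k => Real.exp ((1 - d / 2) * Real.log k - C) with hg
  have hgt : Tendsto g atTop atTop := by
    apply Real.tendsto_exp_atTop.comp
    apply tendsto_atTop_add_const_right
    apply Tendsto.const_mul_atTop (by linarith : (0 : ℝ) < 1 - d / 2)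
    exact Real.tendsto_log_atTop.comp tendsto_natCast_atTop_atTop
  refine tendsto_atTop_mono' atTop ?_ hgt
  filter_upwards [eventually_ge_atTop 2] with k hk
  obtain ⟨m, rfl⟩ : ∃ m, k = m + 2 := ⟨k - 2, by omega⟩
  set k : ℕ := m + 2 with hkdef
  have hksub : k - 1 = m + 1 := by omega
  -- positivity facts
  have hterm2 : ∀ ℓ ∈ Icc 1 (m + 1), (0 : ℝ) < (ℓ : ℝ) / ((ℓ : ℝ) + l2 - 1) := by
    intro ℓ hℓ
    have h1 : 1 ≤ ℓ := (Finset.mem_Icc.mp hℓ).1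
    have : (1 : ℝ) ≤ (ℓ : ℝ) := by exact_mod_cast h1
    apply div_pos (by linarith) (by linarith)
  have hterm1 : ∀ ℓ ∈ Icc 1 k, (0 : ℝ) < (ℓ : ℝ) / ((ℓ : ℝ) + l1 - 1) := by
    intro ℓ hℓ
    have h1 : 1 ≤ ℓ := (Finset.mem_Icc.mp hℓ).1
    have : (1 : ℝ) ≤ (ℓ : ℝ) := by exact_mod_cast h1
    apply div_pos (by linarith) (by linarith)
  have hP2 : (0 : ℝ) < ∏ ℓ ∈ Icc 1 (m + 1), Real.sqrt ((ℓ : ℝ) / ((ℓ : ℝ) + l2 - 1)) :=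
    Finset.prod_pos fun ℓ hℓ => Real.sqrt_pos.mpr (hterm2 ℓ hℓ)
  have hP1 : (0 : ℝ) < ∏ ℓ ∈ Icc 1 k, Real.sqrt ((ℓ : ℝ) / ((ℓ : ℝ) + l1 - 1)) :=
    Finset.prod_pos fun ℓ hℓ => Real.sqrt_pos.mpr (hterm1 ℓ hℓ)
  have hk0 : (0 : ℝ) < (k : ℝ) := by positivity
  have hfk : 0 < f k := by
    simp only [hf, hksub]
    exact div_pos (mul_pos hk0 hP2) hP1
  -- reduce to a log inequality
  have key : (1 - d / 2) * Real.log k - C ≤ Real.log (f k) := by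
    -- compute log f k
    have hlogf : Real.log (f k) = Real.log k
        + (∑ ℓ ∈ Icc 1 (m + 1), Real.log ((ℓ : ℝ) / ((ℓ : ℝ) + l2 - 1)) / 2)
        - (∑ ℓ ∈ Icc 1 k, Real.log ((ℓ : ℝ) / ((ℓ : ℝ) + l1 - 1)) / 2) := by
      simp only [hf, hksub]
      rw [Real.log_div (by positivity) (ne_of_gt hP1),
        Real.log_mul (ne_of_gt hk0) (ne_of_gt hP2),
        Real.log_prod (fun ℓ hℓ => ne_of_gt (Real.sqrt_pos.mpr (hterm2 ℓ hℓ))),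
        Real.log_prod (fun ℓ hℓ => ne_of_gt (Real.sqrt_pos.mpr (hterm1 ℓ hℓ)))]
      rw [Finset.sum_congr rfl (fun ℓ hℓ => Real.log_sqrt (le_of_lt (hterm2 ℓ hℓ))),
        Finset.sum_congr rfl (fun ℓ hℓ => Real.log_sqrt (le_of_lt (hterm1 ℓ hℓ)))]
    -- split the top term of the l1-sum
    have hsplit : ∑ ℓ ∈ Icc 1 k, Real.log ((ℓ : ℝ) / ((ℓ : ℝ) + l1 - 1)) / 2
        = (∑ ℓ ∈ Icc 1 (m + 1), Real.log ((ℓ : ℝ) / ((ℓ : ℝ) + l1 - 1)) / 2)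
          + Real.log ((k : ℝ) / ((k : ℝ) + l1 - 1)) / 2 := by
      exact Finset.sum_Icc_succ_top (by omega) _
    -- bound the combined sum term by term
    have hsum : ∑ ℓ ∈ Icc 1 (m + 1),
        (Real.log ((ℓ : ℝ) / ((ℓ : ℝ) + l2 - 1)) / 2
          - Real.log ((ℓ : ℝ) / ((ℓ : ℝ) + l1 - 1)) / 2)
        ≥ ∑ ℓ ∈ Icc 1 (m + 1), (-(d / 2) * (1 / ((ℓ : ℝ) + l1 - 1))) := by
      apply Finset.sum_le_sum
      intro ℓ hℓ
      have h1 : 1 ≤ ℓ := (Finset.mem_Icc.mp hℓ).1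
      have hℓ1 : (1 : ℝ) ≤ (ℓ : ℝ) := by exact_mod_cast h1
      have hA : (0 : ℝ) < (ℓ : ℝ) + l1 - 1 := by linarith
      have hB : (0 : ℝ) < (ℓ : ℝ) + l2 - 1 := by linarith
      have hℓ0 : (0 : ℝ) < (ℓ : ℝ) := by linarith
      rw [Real.log_div (ne_of_gt hℓ0) (ne_of_gt hB), Real.log_div (ne_of_gt hℓ0) (ne_of_gt hA)]
      have hratio : Real.log (((ℓ : ℝ) + l2 - 1) / ((ℓ : ℝ) + l1 - 1))
          ≤ d / ((ℓ : ℝ) + l1 - 1) := by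
        have := Real.log_le_sub_one_of_pos (div_pos hB hA)
        have heq : ((ℓ : ℝ) + l2 - 1) / ((ℓ : ℝ) + l1 - 1) - 1 = d / ((ℓ : ℝ) + l1 - 1) := by
          field_simp; linarith
        linarith [heq ▸ this]
      have hlogratio : Real.log (((ℓ : ℝ) + l2 - 1) / ((ℓ : ℝ) + l1 - 1))
          = Real.log ((ℓ : ℝ) + l2 - 1) - Real.log ((ℓ : ℝ) + l1 - 1) :=
        Real.log_div (ne_of_gt hB) (ne_of_gt hA)
      rw [hlogratio] at hratio
      have : -(d / 2) * (1 / ((ℓ : ℝ) + l1 - 1)) = -(d / ((ℓ : ℝ) + l1 - 1)) / 2 := by ring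
      rw [this]
      linarith
    -- bound the reciprocal sum
    have hrecip : ∑ ℓ ∈ Icc 1 (m + 1), (1 : ℝ) / ((ℓ : ℝ) + l1 - 1)
        ≤ 1 / l1 + 1 + Real.log k := by
      have h1 := bergman_aux_sum_inv_le l1 hl1 m
      have h2 : (harmonic m : ℝ) ≤ 1 + Real.log m := harmonic_le_one_add_log m
      have h3 : Real.log (m : ℝ) ≤ Real.log (k : ℝ) := by
        rcases Nat.eq_zero_or_pos m with hm | hm
        · subst hm
          simp only [Nat.cast_zero, Real.log_zero]
          apply Real.log_nonneg
          have : (2 : ℝ) ≤ (k : ℝ) := by exact_mod_cast (by omega : 2 ≤ k)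
          linarith
        · apply Real.log_le_log (by exact_mod_cast hm)
          exact_mod_cast (by omega : m ≤ k)
      linarith
    -- bound the last log term
    have hlast : Real.log ((k : ℝ) / ((k : ℝ) + l1 - 1)) ≤ Real.log c := by
      have hk1 : (1 : ℝ) ≤ (k : ℝ) := by exact_mod_cast (by omega : 1 ≤ k)
      have hA : (0 : ℝ) < (k : ℝ) + l1 - 1 := by linarith
      apply Real.log_le_log (div_pos hk0 hA)
      rcases le_or_gt 1 l1 with h | h
      · calc (k : ℝ) / ((k : ℝ) + l1 - 1) ≤ 1 := by
              rw [div_le_one hA]; linarith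
          _ ≤ c := hc1
      · calc (k : ℝ) / ((k : ℝ) + l1 - 1) ≤ 1 / l1 := by
              rw [div_le_div_iff₀ hA hl1]
              nlinarith
          _ ≤ c := le_max_right _ _
    -- put everything together
    rw [hlogf, hsplit]
    have hsum' : ∑ ℓ ∈ Icc 1 (m + 1),
        (Real.log ((ℓ : ℝ) / ((ℓ : ℝ) + l2 - 1)) / 2
          - Real.log ((ℓ : ℝ) / ((ℓ : ℝ) + l1 - 1)) / 2)
        ≥ -(d / 2) * (1 / l1 + 1 + Real.log k) := by
      calc ∑ ℓ ∈ Icc 1 (m + 1),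
            (Real.log ((ℓ : ℝ) / ((ℓ : ℝ) + l2 - 1)) / 2
              - Real.log ((ℓ : ℝ) / ((ℓ : ℝ) + l1 - 1)) / 2)
          ≥ ∑ ℓ ∈ Icc 1 (m + 1), (-(d / 2) * (1 / ((ℓ : ℝ) + l1 - 1))) := hsum
        _ = -(d / 2) * ∑ ℓ ∈ Icc 1 (m + 1), (1 : ℝ) / ((ℓ : ℝ) + l1 - 1) := by
            rw [Finset.mul_sum]
        _ ≥ -(d / 2) * (1 / l1 + 1 + Real.log k) := by
            apply mul_le_mul_of_nonpos_left hrecip (by linarith)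
    have hdist : ∑ ℓ ∈ Icc 1 (m + 1),
        (Real.log ((ℓ : ℝ) / ((ℓ : ℝ) + l2 - 1)) / 2
          - Real.log ((ℓ : ℝ) / ((ℓ : ℝ) + l1 - 1)) / 2)
        = (∑ ℓ ∈ Icc 1 (m + 1), Real.log ((ℓ : ℝ) / ((ℓ : ℝ) + l2 - 1)) / 2)
          - (∑ ℓ ∈ Icc 1 (m + 1), Real.log ((ℓ : ℝ) / ((ℓ : ℝ) + l1 - 1)) / 2) :=
      Finset.sum_sub_distrib _ _
    rw [hdist] at hsum'
    rw [hC]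
    linarith
  -- conclude
  calc g k = Real.exp ((1 - d / 2) * Real.log k - C) := rfl
    _ ≤ Real.exp (Real.log (f k)) := Real.exp_le_exp.mpr key
    _ = f k := Real.exp_log hfk
end

section
/- Property (H) for Bergman shifts: let T1, T2 be the weighted backward shifts with weights a_k = sqrt(k/(k+λ1-1)) and b_k = sqrt(k/(k+λ2-1)), where 0 < λ2 - λ1 < 2. If Y is a bounded operator with T1 Y = Y T2 and Y = T1 X - X T2 for some bounded X, then Y = 0. -/
open Finset Filter

private lemma bergmanH_tele (t : ℝ) (ht : 0 < t) (i : ℕ) :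
    ∏ m ∈ Finset.range i, (((m : ℝ) + t) / ((m : ℝ) + t + 1)) = t / ((i : ℝ) + t) := by
  induction i with
  | zero => simp [div_self ht.ne']
  | succ n ih =>
    rw [Finset.prod_range_succ, ih]
    have h1 : (0:ℝ) < (n : ℝ) + t := by positivity
    have h2 : (0:ℝ) < (n : ℝ) + t + 1 := by positivity
    push_cast
    rw [div_mul_div_comm]
    rw [div_eq_div_iff (by positivity) (by positivity)]
    ring

private lemma bergmanH_prodA (d : ℕ) (i : ℕ) :
    ∏ m ∈ Finset.range i, (((m : ℝ) + (d : ℝ) + 1) / ((m : ℝ) + 1))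
      = (Nat.factorial (i + d) : ℝ) / ((Nat.factorial d : ℝ) * (Nat.factorial i : ℝ)) := by
  induction i with
  | zero => simp [div_self (by positivity : ((Nat.factorial d : ℝ)) ≠ 0)]
  | succ n ih =>
    rw [Finset.prod_range_succ, ih]
    have h1 : (0:ℝ) < (Nat.factorial n : ℝ) := by positivity
    have h2 : (0:ℝ) < (Nat.factorial d : ℝ) := by positivity
    have h3 : (0:ℝ) < (n:ℝ) + 1 := by positivity
    rw [show n + 1 + d = (n + d) + 1 by ring, Nat.factorial_succ, Nat.factorial_succ]
    push_cast
    rw [div_mul_div_comm]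
    rw [div_eq_div_iff (by positivity) (by positivity)]
    ring

private lemma bergmanH_factGE (i d : ℕ) :
    Nat.factorial i * (i + 1) ^ d ≤ Nat.factorial (i + d) := by
  induction d with
  | zero => simp
  | succ n ih =>
    rw [pow_succ, show i + (n+1) = (i + n) + 1 by ring, Nat.factorial_succ]
    calc Nat.factorial i * ((i+1)^n * (i+1)) = (Nat.factorial i * (i+1)^n) * (i+1) := by ring
    _ ≤ Nat.factorial (i+n) * (i+1) := Nat.mul_le_mul_right _ ih
    _ ≤ Nat.factorial (i+n) * (i + n + 1) := Nat.mul_le_mul (Nat.le_refl _) (by omega)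
    _ = (i + n + 1) * Nat.factorial (i+n) := mul_comm _ _

private lemma bergmanH_bern (t g g' : ℝ) (ht : 0 < t) (hg0 : 0 ≤ g) (hg : g ≤ g')
    (hg1 : 1 ≤ g') : (t / (t + 1)) ^ g' ≤ t / (t + g) := by
  have h1 : (0:ℝ) ≤ 1/t := by positivity
  have hB : 1 + g / t ≤ (1 + 1/t) ^ g' := by
    calc 1 + g / t ≤ 1 + g' * (1/t) := by
          rw [mul_one_div]; gcongr
    _ ≤ (1 + 1/t) ^ g' := one_add_mul_self_le_rpow_one_add (by linarith) hg1
  have e1 : t / (t+1) = (1 + 1/t)⁻¹ := by field_simp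
  have e2 : t / (t+g) = (1 + g/t)⁻¹ := by
    rw [inv_eq_one_div]
    rw [div_eq_div_iff (by positivity) (by positivity)]
    field_simp
  rw [e1, e2, Real.inv_rpow (by positivity)]
  exact inv_anti₀ (by positivity) hB

private lemma bergmanH_div (l1 l2 : ℝ) (hl1 : 0 < l1) (hd1 : l1 < l2) (hd2 : l2 < l1 + 2)
    (d : ℕ) :
    Filter.Tendsto (fun i : ℕ => (i : ℝ) *
      ∏ m ∈ Finset.range i,
        (Real.sqrt (((m:ℝ) + (d:ℝ) + 1) / ((m:ℝ) + (d:ℝ) + l2)) /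
          Real.sqrt (((m:ℝ) + 1) / ((m:ℝ) + l1)))) Filter.atTop Filter.atTop := by
  have hl2 : 0 < l2 := lt_trans hl1 hd1
  set δ : ℝ := l2 - l1 with hδdef
  have hδpos : 0 < δ := by simp [hδdef]; linarith
  set g : ℝ := (d:ℝ) + δ with hgdef
  set g' : ℝ := max g 1 with hg'def
  have hg0 : 0 ≤ g := by positivity
  have hgg' : g ≤ g' := le_max_left _ _
  have hg'1 : 1 ≤ g' := le_max_right _ _
  have hg'lt : g' < (d:ℝ) + 2 := by
    apply max_lt
    · simp only [hgdef]; linarith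
    · have : (0:ℝ) ≤ (d:ℝ) := Nat.cast_nonneg d
      linarith
  set η : ℝ := (d:ℝ) + 2 - g' with hηdef
  have hηpos : 0 < η := by simp only [hηdef]; linarith
  set ρ : ℕ → ℝ := fun m => Real.sqrt (((m:ℝ)+(d:ℝ)+1)/((m:ℝ)+(d:ℝ)+l2)) /
    Real.sqrt (((m:ℝ)+1)/((m:ℝ)+l1)) with hρdef
  have hρpos : ∀ m, 0 < ρ m := by
    intro m
    apply div_pos <;> (apply Real.sqrt_pos.mpr; positivity)
  set P : ℕ → ℝ := fun i => ∏ m ∈ Finset.range i, ρ m with hPdef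
  have hPpos : ∀ i, 0 < P i := fun i => Finset.prod_pos (fun m _ => hρpos m)
  have hρsq : ∀ m : ℕ, ρ m ^ 2
      = (((m:ℝ)+(d:ℝ)+1)/((m:ℝ)+1)) * (((m:ℝ)+l1)/(((m:ℝ)+l1)+g)) := by
    intro m
    have h1 : (0:ℝ) < (m:ℝ)+(d:ℝ)+l2 := by positivity
    have h2 : (0:ℝ) < (m:ℝ)+l1 := by positivity
    have h3 : (0:ℝ) < (m:ℝ)+1 := by positivity
    have h4 : (0:ℝ) < (m:ℝ)+(d:ℝ)+1 := by positivity
    have hge : (m:ℝ)+l1+g = (m:ℝ)+(d:ℝ)+l2 := by simp only [hgdef, hδdef]; ring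
    rw [hρdef]
    simp only
    rw [div_pow, Real.sq_sqrt (by positivity), Real.sq_sqrt (by positivity), hge]
    field_simp
  -- square of the product
  have hPsq : ∀ i, P i ^ 2 = (∏ m ∈ Finset.range i, (((m:ℝ)+(d:ℝ)+1)/((m:ℝ)+1)))
      * (∏ m ∈ Finset.range i, (((m:ℝ)+l1)/(((m:ℝ)+l1)+g))) := by
    intro i
    rw [hPdef]
    simp only
    rw [← Finset.prod_pow]
    rw [← Finset.prod_mul_distrib]
    exact Finset.prod_congr rfl (fun m _ => hρsq m)
  -- lower bound for the second product
  have hB : ∀ i : ℕ, (l1/((i:ℝ)+l1)) ^ g' ≤ ∏ m ∈ Finset.range i, (((m:ℝ)+l1)/(((m:ℝ)+l1)+g)) := by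
    intro i
    have step1 : ∀ m ∈ Finset.range i,
        (((m:ℝ)+l1)/(((m:ℝ)+l1)+1)) ^ g' ≤ ((m:ℝ)+l1)/(((m:ℝ)+l1)+g) := by
      intro m _
      exact bergmanH_bern ((m:ℝ)+l1) g g' (by positivity) hg0 hgg' hg'1
    calc (l1/((i:ℝ)+l1)) ^ g'
        = (∏ m ∈ Finset.range i, (((m:ℝ)+l1)/(((m:ℝ)+l1)+1))) ^ g' := by
          rw [bergmanH_tele l1 hl1 i]
      _ = ∏ m ∈ Finset.range i, (((m:ℝ)+l1)/(((m:ℝ)+l1)+1)) ^ g' := by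
          rw [Real.finset_prod_rpow _ _ (fun m _ => by positivity)]
      _ ≤ _ := Finset.prod_le_prod (fun m _ => by positivity) step1
  -- lower bound for the first product
  have hA : ∀ i : ℕ, ((i:ℝ)+1)^d / (Nat.factorial d : ℝ)
      ≤ ∏ m ∈ Finset.range i, (((m:ℝ)+(d:ℝ)+1)/((m:ℝ)+1)) := by
    intro i
    rw [bergmanH_prodA d i]
    rw [div_le_div_iff₀ (by positivity) (by positivity)]
    have h := bergmanH_factGE i d
    have h' : ((Nat.factorial i : ℝ)) * ((i:ℝ)+1)^d ≤ (Nat.factorial (i+d) : ℝ) := by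
      have := (Nat.cast_le (α := ℝ)).mpr h
      push_cast at this ⊢
      linarith
    calc ((i:ℝ)+1)^d * ((Nat.factorial d:ℝ) * (Nat.factorial i:ℝ))
        = (Nat.factorial d:ℝ) * ((Nat.factorial i:ℝ) * ((i:ℝ)+1)^d) := by ring
      _ ≤ (Nat.factorial d:ℝ) * (Nat.factorial (i+d):ℝ) := by
          apply mul_le_mul_of_nonneg_left h' (by positivity)
      _ = (Nat.factorial (i+d):ℝ) * (Nat.factorial d:ℝ) := by ring
  -- the key lower bound
  set K : ℝ := l1 ^ g' / ((4:ℝ) * (Nat.factorial d : ℝ) * (1+l1)^(d+2)) with hKdef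
  have hKpos : 0 < K := by positivity
  have hmain : ∀ i : ℕ, 1 ≤ i → Real.sqrt K * ((i:ℝ)+l1) ^ (η/2) ≤ (i:ℝ) * P i := by
    intro i hi
    have hi1 : (1:ℝ) ≤ (i:ℝ) := by exact_mod_cast hi
    have hipos : (0:ℝ) < (i:ℝ) := by linarith
    have hil : (0:ℝ) < (i:ℝ)+l1 := by positivity
    have hrg : (0:ℝ) < ((i:ℝ)+l1) ^ g' := Real.rpow_pos_of_pos hil g'
    have hsq : K * ((i:ℝ)+l1) ^ η ≤ ((i:ℝ) * P i)^2 := by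
      have h2 : ((i:ℝ)+1)^(d+2) / 4 ≤ (i:ℝ)^2 * ((i:ℝ)+1)^d := by
        have he : ((i:ℝ)+1)^(d+2) = ((i:ℝ)+1)^2 * ((i:ℝ)+1)^d := by ring
        rw [he]
        have h21 : ((i:ℝ)+1)^2 / 4 ≤ (i:ℝ)^2 := by nlinarith
        calc ((i:ℝ)+1)^2 * ((i:ℝ)+1)^d / 4 = (((i:ℝ)+1)^2/4) * ((i:ℝ)+1)^d := by ring
          _ ≤ (i:ℝ)^2 * ((i:ℝ)+1)^d := by
              apply mul_le_mul_of_nonneg_right h21 (by positivity)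
      have h3 : ((i:ℝ)+l1)^(d+2) / (1+l1)^(d+2) ≤ ((i:ℝ)+1)^(d+2) := by
        rw [div_le_iff₀ (by positivity), ← mul_pow]
        apply pow_le_pow_left₀ hil.le
        nlinarith
      have core : ((i:ℝ)+l1)^(d+2) / (4*(1+l1)^(d+2)) ≤ (i:ℝ)^2 * ((i:ℝ)+1)^d := by
        calc ((i:ℝ)+l1)^(d+2) / (4*(1+l1)^(d+2))
            = (((i:ℝ)+l1)^(d+2) / (1+l1)^(d+2)) / 4 := by
              rw [div_div]
              congr 1
              ring
          _ ≤ ((i:ℝ)+1)^(d+2) / 4 := by gcongr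
          _ ≤ (i:ℝ)^2 * ((i:ℝ)+1)^d := h2
      have h4 : (((i:ℝ)+1)^d / (Nat.factorial d : ℝ)) * (l1/((i:ℝ)+l1)) ^ g' ≤ P i ^ 2 := by
        rw [hPsq i]
        apply mul_le_mul (hA i) (hB i) (by positivity)
        exact le_trans (by positivity) (hA i)
      have h5 : (l1/((i:ℝ)+l1)) ^ g' = l1 ^ g' / ((i:ℝ)+l1) ^ g' :=
        Real.div_rpow hl1.le hil.le g'
      have h6 : ((i:ℝ)+l1) ^ η = ((i:ℝ)+l1)^(d+2) / ((i:ℝ)+l1) ^ g' := by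
        rw [hηdef, show (d:ℝ) + 2 = ((d+2 : ℕ) : ℝ) by push_cast; ring]
        rw [Real.rpow_sub hil, Real.rpow_natCast]
      have e1 : K * ((i:ℝ)+l1) ^ η
          = (((i:ℝ)+l1)^(d+2) / (4*(1+l1)^(d+2))) * (l1 ^ g' / ((Nat.factorial d : ℝ) * ((i:ℝ)+l1) ^ g')) := by
        have halg1 : ∀ a p B F R : ℝ, a/(4*F*B) * (p/R) = (p/(4*B)) * (a/(F*R)) := by
          intros a p B F R
          ring
        rw [hKdef, h6]
        exact halg1 _ _ _ _ _
      have e2 : ((i:ℝ)^2 * ((i:ℝ)+1)^d) * (l1 ^ g' / ((Nat.factorial d : ℝ) * ((i:ℝ)+l1) ^ g'))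
          = (i:ℝ)^2 * ((((i:ℝ)+1)^d / (Nat.factorial d : ℝ)) * (l1/((i:ℝ)+l1)) ^ g') := by
        rw [h5]
        ring
      calc K * ((i:ℝ)+l1) ^ η
          = (((i:ℝ)+l1)^(d+2) / (4*(1+l1)^(d+2))) * (l1 ^ g' / ((Nat.factorial d : ℝ) * ((i:ℝ)+l1) ^ g')) := e1
        _ ≤ ((i:ℝ)^2 * ((i:ℝ)+1)^d) * (l1 ^ g' / ((Nat.factorial d : ℝ) * ((i:ℝ)+l1) ^ g')) := by
            apply mul_le_mul_of_nonneg_right core (by positivity)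
        _ = (i:ℝ)^2 * ((((i:ℝ)+1)^d / (Nat.factorial d : ℝ)) * (l1/((i:ℝ)+l1)) ^ g') := e2
        _ ≤ (i:ℝ)^2 * P i ^2 := by
            apply mul_le_mul_of_nonneg_left h4 (by positivity)
        _ = ((i:ℝ) * P i)^2 := by ring
    have hnn : (0:ℝ) ≤ (i:ℝ) * P i := by
      have := (hPpos i).le
      positivity
    have hsqrt := Real.sqrt_le_sqrt hsq
    rw [Real.sqrt_sq hnn] at hsqrt
    have hmul : Real.sqrt (K * ((i:ℝ)+l1) ^ η) = Real.sqrt K * Real.sqrt (((i:ℝ)+l1) ^ η) :=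
      Real.sqrt_mul hKpos.le _
    have hhalf : Real.sqrt (((i:ℝ)+l1) ^ η) = ((i:ℝ)+l1) ^ (η/2) := by
      rw [Real.sqrt_eq_rpow, ← Real.rpow_mul hil.le]
      ring_nf
    rw [hmul, hhalf] at hsqrt
    exact hsqrt
  have htd : Filter.Tendsto (fun i : ℕ => Real.sqrt K * ((i:ℝ)+l1)^(η/2))
      Filter.atTop Filter.atTop := by
    apply Filter.Tendsto.const_mul_atTop (Real.sqrt_pos.mpr hKpos)
    exact (tendsto_rpow_atTop (by positivity)).comp
      (Filter.tendsto_atTop_add_const_right _ l1 tendsto_natCast_atTop_atTop)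
  exact Filter.tendsto_atTop_mono' _ ((Filter.eventually_ge_atTop 1).mono hmain) htd

/-- Property (H) for Bergman shifts: if `T1`, `T2` are the backward weighted shifts
with weights `√(k/(k+λ₁-1))`, `√(k/(k+λ₂-1))` and `0 < λ₂ - λ₁ < 2`, then any bounded
`Y` with `T1 Y = Y T2` and `Y = T1 X - X T2` for some bounded `X` must vanish. -/
theorem bergman_shifts_property_H
    {H : Type*} [NormedAddCommGroup H] [InnerProductSpace ℂ H] [CompleteSpace H]
    (e : HilbertBasis ℕ ℂ H) (l1 l2 : ℝ)
    (hl1 : 0 < l1) (hlt : 0 < l2 - l1) (hlt2 : l2 - l1 < 2)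
    (T1 T2 X Y : H →L[ℂ] H)
    (hT1z : T1 (e 0) = 0)
    (hT1 : ∀ k : ℕ, T1 (e (k + 1)) = (Real.sqrt (((k : ℝ) + 1) / ((k : ℝ) + l1)) : ℂ) • e k)
    (hT2z : T2 (e 0) = 0)
    (hT2 : ∀ k : ℕ, T2 (e (k + 1)) = (Real.sqrt (((k : ℝ) + 1) / ((k : ℝ) + l2)) : ℂ) • e k)
    (hint : T1 ∘L Y = Y ∘L T2)
    (hcomm : Y = T1 ∘L X - X ∘L T2) :
    Y = 0 := by
  classical
  have hl2 : 0 < l2 := by linarith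
  set aw : ℕ → ℝ := fun k => Real.sqrt (((k:ℝ)+1)/((k:ℝ)+l1)) with hawdef
  set bw : ℕ → ℝ := fun k => Real.sqrt (((k:ℝ)+1)/((k:ℝ)+l2)) with hbwdef
  have haw1 : ∀ k : ℕ, T1 (e (k+1)) = ((aw k : ℝ) : ℂ) • e k := by
    intro k; rw [hawdef]; simpa using hT1 k
  have hbw1 : ∀ k : ℕ, T2 (e (k+1)) = ((bw k : ℝ) : ℂ) • e k := by
    intro k; rw [hbwdef]; simpa using hT2 k
  have hawpos : ∀ k, 0 < aw k := by
    intro k; rw [hawdef]; exact Real.sqrt_pos.mpr (by positivity)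
  have hbwpos : ∀ k, 0 < bw k := by
    intro k; rw [hbwdef]; exact Real.sqrt_pos.mpr (by positivity)
  set A : ℝ := Real.sqrt (max 1 (1/l1)) with hAdef
  have hawle : ∀ k, aw k ≤ A := by
    intro k
    rw [hawdef, hAdef]
    apply Real.sqrt_le_sqrt
    rcases le_total 1 l1 with h | h
    · exact le_trans (div_le_one_of_le₀ (by push_cast; linarith) (by positivity)) (le_max_left _ _)
    · refine le_trans ?_ (le_max_right _ _)
      rw [div_le_div_iff₀ (by positivity) (by positivity)]
      have : (0:ℝ) ≤ (k:ℝ) := Nat.cast_nonneg k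
      nlinarith
  have hbwle : ∀ k, bw k ≤ aw k := by
    intro k
    rw [hawdef, hbwdef]
    apply Real.sqrt_le_sqrt
    gcongr
    linarith
  have hA0 : 0 < A := lt_of_lt_of_le (hawpos 0) (hawle 0)
  have horth : ∀ i j : ℕ, (inner ℂ (e i) (e j) : ℂ) = if i = j then 1 else 0 := by
    have h := e.orthonormal
    rw [orthonormal_iff_ite] at h
    exact h
  have hnorm1 : ∀ i, ‖e i‖ = 1 := e.orthonormal.1
  have hdense : Dense (Submodule.span ℂ (Set.range e) : Set H) :=
    Submodule.dense_iff_topologicalClosure_eq_top.mpr e.dense_span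
  -- the key functional identity for T1
  have F1 : ∀ (i : ℕ) (u : H), (inner ℂ (e i) (T1 u) : ℂ) = (aw i : ℂ) * inner ℂ (e (i+1)) u := by
    intro i u
    have hfun : (innerSL ℂ (e i)).comp T1 = (aw i : ℂ) • innerSL ℂ (e (i+1)) := by
      apply ContinuousLinearMap.ext_on hdense
      rintro _ ⟨k, rfl⟩
      match k with
      | 0 =>
        simp only [ContinuousLinearMap.comp_apply, ContinuousLinearMap.smul_apply,
          innerSL_apply_apply, hT1z, inner_zero_right, smul_eq_mul, horth]
        simp
      | (k+1) =>
        simp only [ContinuousLinearMap.comp_apply, ContinuousLinearMap.smul_apply,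
          innerSL_apply_apply, smul_eq_mul, haw1 k, inner_smul_right, horth]
        by_cases h : i = k
        · subst h; simp
        · simp [h, (by omega : ¬ (i+1 = k+1))]
    have happ : ((innerSL ℂ (e i)).comp T1) u = ((aw i : ℂ) • innerSL ℂ (e (i+1))) u := by
      rw [hfun]
    simpa only [ContinuousLinearMap.comp_apply, ContinuousLinearMap.smul_apply,
      innerSL_apply_apply, smul_eq_mul] using happ
  -- matrix entries
  set M : (H →L[ℂ] H) → ℕ → ℕ → ℂ := fun Z i j => (inner ℂ (e i) (Z (e j)) : ℂ) with hMdef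
  have hMbound : ∀ (Z : H →L[ℂ] H) (i j : ℕ), ‖M Z i j‖ ≤ ‖Z‖ := by
    intro Z i j
    rw [hMdef]
    calc ‖(inner ℂ (e i) (Z (e j)) : ℂ)‖ ≤ ‖e i‖ * ‖Z (e j)‖ := norm_inner_le_norm _ _
    _ = ‖Z (e j)‖ := by rw [hnorm1]; ring
    _ ≤ ‖Z‖ * ‖e j‖ := Z.le_opNorm _
    _ = ‖Z‖ := by rw [hnorm1]; ring
  have hMT1 : ∀ (Z : H →L[ℂ] H) (i j : ℕ), M (T1 ∘L Z) i j = (aw i : ℂ) * M Z (i+1) j := by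
    intro Z i j
    rw [hMdef]
    exact F1 i (Z (e j))
  have hMT2z : ∀ (Z : H →L[ℂ] H) (i : ℕ), M (Z ∘L T2) i 0 = 0 := by
    intro Z i
    rw [hMdef]
    simp [hT2z]
  have hMT2 : ∀ (Z : H →L[ℂ] H) (i k : ℕ), M (Z ∘L T2) i (k+1) = (bw k : ℂ) * M Z i k := by
    intro Z i k
    rw [hMdef]
    simp only [ContinuousLinearMap.comp_apply]
    rw [hbw1 k, map_smul, inner_smul_right]
  have hawC : ∀ i, (aw i : ℂ) ≠ 0 := by
    intro i
    simpa using (hawpos i).ne'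
  -- intertwining on entries
  have hI1 : ∀ i k : ℕ, (aw i : ℂ) * M Y (i+1) (k+1) = (bw k : ℂ) * M Y i k := by
    intro i k
    rw [← hMT1 Y i (k+1), hint, hMT2]
  have hI0 : ∀ i : ℕ, M Y (i+1) 0 = 0 := by
    intro i
    have h : (aw i : ℂ) * M Y (i+1) 0 = 0 := by
      rw [← hMT1 Y i 0, hint, hMT2z]
    exact (mul_eq_zero.mp h).resolve_left (hawC i)
  -- commutator entries
  have hMsub : ∀ i j : ℕ, M Y i j = M (T1 ∘L X) i j - M (X ∘L T2) i j := by
    intro i j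
    rw [hMdef]
    simp only
    rw [hcomm]
    simp [inner_sub_right]
  have hC : ∀ i k : ℕ, M Y i (k+1) = (aw i : ℂ) * M X (i+1) (k+1) - (bw k : ℂ) * M X i k := by
    intro i k
    rw [hMsub, hMT1, hMT2]
  -- first row vanishes
  have key : ∀ d : ℕ, M Y 0 d = 0 := by
    intro d
    by_contra hc0
    set c : ℂ := M Y 0 d with hcdef
    set ρ : ℕ → ℝ := fun m => bw (m+d) / aw m with hρdef
    have hρpos : ∀ m, 0 < ρ m := by
      intro m; rw [hρdef]; exact div_pos (hbwpos _) (hawpos _)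
    set P : ℕ → ℝ := fun i => ∏ m ∈ Finset.range i, ρ m with hPdef
    have hPpos : ∀ i, 0 < P i := by
      intro i; rw [hPdef]; exact Finset.prod_pos fun m _ => hρpos m
    have hPsucc : ∀ i, P (i+1) = P i * ρ i := by
      intro i; rw [hPdef]; exact Finset.prod_range_succ _ _
    have hbwaw : ∀ m : ℕ, (bw (m+d) : ℂ) = (ρ m : ℂ) * (aw m : ℂ) := by
      intro m
      have hreal : ρ m * aw m = bw (m+d) := by
        rw [hρdef]; exact div_mul_cancel₀ _ (hawpos m).ne'
      rw [← hreal]; push_cast; ring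
    have hdiag : ∀ i : ℕ, M Y i (i+d) = (P i : ℂ) * c := by
      intro i
      induction i with
      | zero => simp [hPdef, hcdef]
      | succ n ih =>
        have h1 := hI1 n (n+d)
        rw [hbwaw n] at h1
        have h2 : M Y (n+1) ((n+d)+1) = (ρ n : ℂ) * M Y n (n+d) := by
          apply mul_left_cancel₀ (hawC n)
          rw [h1]; ring
        rw [show (n+1)+d = (n+d)+1 from by omega, h2, ih, hPsucc]
        push_cast; ring
    set s : ℕ → ℂ := fun i => (aw i : ℂ) * M X (i+1) (i+d) with hsdef
    have hsbound : ∀ i, ‖s i‖ ≤ A * ‖X‖ := by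
      intro i
      rw [hsdef]
      simp only
      rw [norm_mul]
      have h1 : ‖((aw i : ℝ) : ℂ)‖ = aw i := by
        rw [Complex.norm_real]
        exact abs_of_pos (hawpos i)
      rw [h1]
      exact mul_le_mul (hawle i) (hMbound X _ _) (norm_nonneg _) (le_of_lt hA0)
    have hsrec : ∀ i, s (i+1) = (ρ i : ℂ) * s i + (P (i+1) : ℂ) * c := by
      intro i
      have h1 := hC (i+1) (i+d)
      have h2 : M Y (i+1) ((i+d)+1) = (P (i+1) : ℂ) * c := by
        rw [← hdiag (i+1), show (i+1)+d = (i+d)+1 from by omega]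
      have hs1 : s (i+1) = (aw (i+1) : ℂ) * M X (i+1+1) ((i+d)+1) := by
        rw [hsdef]
        simp only
        rw [show (i+1)+d = (i+d)+1 from by omega]
      have hs0 : s i = (aw i : ℂ) * M X (i+1) (i+d) := by rw [hsdef]
      rw [hs1, hs0]
      rw [h2] at h1
      rw [hbwaw i] at h1
      linear_combination -h1
    have hform : ∀ i : ℕ, s i = (P i : ℂ) * (s 0 + (i:ℂ) * c) := by
      intro i
      induction i with
      | zero => simp [hPdef]
      | succ n ih =>
        rw [hsrec n, ih, hPsucc n]
        push_cast
        ring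
    -- divergence
    have hdiv : Filter.Tendsto (fun i : ℕ => (i:ℝ) * P i) Filter.atTop Filter.atTop := by
      have h := bergmanH_div l1 l2 hl1 (by linarith) (by linarith) d
      apply h.congr
      intro i
      congr 1
      rw [hPdef]
      apply Finset.prod_congr rfl
      intro m _
      have hb : bw (m+d) = Real.sqrt (((m:ℝ)+(d:ℝ)+1)/((m:ℝ)+(d:ℝ)+l2)) := by
        rw [hbwdef]
        simp only
        push_cast
        ring_nf
      have ha : aw m = Real.sqrt (((m:ℝ)+1)/((m:ℝ)+l1)) := by rw [hawdef]
      rw [hρdef]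
      simp only
      rw [hb, ha]
    have hcpos : 0 < ‖c‖ := norm_pos_iff.mpr hc0
    obtain ⟨i, hia, hib⟩ :=
      ((hdiv.eventually (Filter.eventually_gt_atTop (2*(A*‖X‖+1)/‖c‖))).and
        (tendsto_natCast_atTop_atTop.eventually
          (Filter.eventually_ge_atTop (2*‖s 0‖/‖c‖)))).exists
    -- derive contradiction
    have h1 : ‖s i‖ = P i * ‖s 0 + (i:ℂ) * c‖ := by
      rw [hform i, norm_mul, Complex.norm_real, Real.norm_eq_abs, abs_of_pos (hPpos i)]
    have h2 : (i:ℝ) * ‖c‖ - ‖s 0‖ ≤ ‖s 0 + (i:ℂ) * c‖ := by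
      have h3 := norm_sub_norm_le ((i:ℂ) * c) (-(s 0))
      rw [sub_neg_eq_add, norm_neg, add_comm] at h3
      have h4 : ‖(i:ℂ) * c‖ = (i:ℝ) * ‖c‖ := by
        rw [norm_mul, Complex.norm_natCast]
      rw [h4] at h3
      linarith
    have h5 : ‖s 0‖ ≤ (i:ℝ) * ‖c‖ / 2 := by
      have hib' : 2*‖s 0‖/‖c‖ ≤ (i:ℝ) := hib
      rw [div_le_iff₀ hcpos] at hib'
      linarith
    have h6 : (i:ℝ) * ‖c‖ / 2 ≤ ‖s 0 + (i:ℂ) * c‖ := by linarith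
    have h8 : P i * ((i:ℝ) * ‖c‖ / 2) ≤ A*‖X‖ := by
      calc P i * ((i:ℝ)*‖c‖/2) ≤ P i * ‖s 0 + (i:ℂ)*c‖ :=
            mul_le_mul_of_nonneg_left h6 (hPpos i).le
        _ = ‖s i‖ := h1.symm
        _ ≤ A*‖X‖ := hsbound i
    have h9 : (2*(A*‖X‖+1)/‖c‖) * (‖c‖/2) < ((i:ℝ) * P i) * (‖c‖/2) :=
      mul_lt_mul_of_pos_right hia (by positivity)
    have h10 : (2*(A*‖X‖+1)/‖c‖) * (‖c‖/2) = A*‖X‖+1 := by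
      have halg : ∀ x n : ℝ, n ≠ 0 → (2*x/n)*(n/2) = x := by
        intro x n hn
        field_simp
      exact halg _ _ hcpos.ne'
    have h11 : ((i:ℝ) * P i) * (‖c‖/2) = P i * ((i:ℝ)*‖c‖/2) := by ring
    rw [h10, h11] at h9
    linarith
  -- all entries vanish
  have hup : ∀ d i : ℕ, M Y i (i+d) = 0 := by
    intro d i
    induction i with
    | zero => simpa using key d
    | succ n ih =>
      have h := hI1 n (n+d)
      rw [ih, mul_zero] at h
      have h2 := (mul_eq_zero.mp h).resolve_left (hawC n)
      rw [show (n+1)+d = (n+d)+1 from by omega]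
      exact h2
  have hlow : ∀ r i : ℕ, M Y (i+(r+1)) i = 0 := by
    intro r i
    induction i with
    | zero => simpa using hI0 r
    | succ n ih =>
      have h := hI1 (n+(r+1)) n
      rw [ih, mul_zero] at h
      have h2 := (mul_eq_zero.mp h).resolve_left (hawC _)
      rw [show (n+1)+(r+1) = (n+(r+1))+1 from by omega]
      exact h2
  have hall : ∀ i j : ℕ, M Y i j = 0 := by
    intro i j
    rcases le_or_gt i j with h | h
    · rw [show j = i + (j-i) from by omega]
      exact hup (j-i) i
    · rw [show i = j + ((i-j-1)+1) from by omega]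
      exact hlow (i-j-1) j
  have hYe : ∀ j : ℕ, Y (e j) = 0 := by
    intro j
    have h := e.hasSum_repr (Y (e j))
    have h0 : (fun i => e.repr (Y (e j)) i • e i) = fun _ => (0:H) := by
      funext i
      rw [e.repr_apply_apply]
      have : (inner ℂ (e i) (Y (e j)) : ℂ) = 0 := hall i j
      rw [this, zero_smul]
    rw [h0] at h
    exact h.unique hasSum_zero
  apply ContinuousLinearMap.ext_on hdense
  rintro _ ⟨j, rfl⟩
  simp [hYe j]
end

section
/- Let λ1 < λ2 be positive reals and let T1, T2 be the backward weighted shifts with weights a_k = sqrt(k/(k+λ1-1)) and b_k = sqrt(k/(k+λ2-1)). Then the diagonal operator D with D e_k = c_k e_k, where c_k = ∏_{ℓ=1}^{k-1} (b_ℓ/a_ℓ), satisfies T1 D = D T2 and D is compact (indeed c_k → 0). -/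
open Finset Filter
open scoped ENNReal

local notation "⟪" x ", " y "⟫" => @inner ℂ _ _ x y

/-- Any continuous linear functional (into the scalars) is a compact operator. -/
lemma aux_clm_scalar_compact {H : Type*} [NormedAddCommGroup H] [InnerProductSpace ℂ H]
    (f : H →L[ℂ] ℂ) : IsCompactOperator ⇑f := by
  refine ⟨Metric.closedBall 0 ‖f‖, isCompact_closedBall _ _, ?_⟩
  have hsub : Metric.closedBall (0 : H) 1 ⊆ ⇑f ⁻¹' Metric.closedBall 0 ‖f‖ := by
    intro x hx
    simp only [Metric.mem_closedBall, dist_zero_right] at hx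
    simp only [Set.mem_preimage, Metric.mem_closedBall, dist_zero_right]
    calc ‖f x‖ ≤ ‖f‖ * ‖x‖ := f.le_opNorm x
      _ ≤ ‖f‖ * 1 := by gcongr
      _ = ‖f‖ := mul_one _
  exact Filter.mem_of_superset (Metric.closedBall_mem_nhds 0 one_pos) hsub

/-- Inner products against basis vectors of a diagonal operator. -/
lemma aux_diag_inner {H : Type*} [NormedAddCommGroup H] [InnerProductSpace ℂ H] [CompleteSpace H]
    (e : HilbertBasis ℕ ℂ H) (S : H →L[ℂ] H) (γ : ℕ → ℂ)
    (hS : ∀ k, S (e k) = γ k • e k) (x : H) (i : ℕ) :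
    ⟪e i, S x⟫ = γ i * ⟪e i, x⟫ := by
  classical
  have horth := orthonormal_iff_ite.mp e.orthonormal
  have h1 : HasSum (fun k => e.repr x k • S (e k)) (S x) := by
    simpa only [map_smul] using (e.hasSum_repr x).mapL S
  have h2 : HasSum (fun k => (innerSL ℂ (e i)) (e.repr x k • S (e k))) ((innerSL ℂ (e i)) (S x)) :=
    h1.mapL (innerSL ℂ (e i))
  have h3 : (fun k => (innerSL ℂ (e i)) (e.repr x k • S (e k)))
      = fun k => (if k = i then γ i * e.repr x i else 0) := by
    funext k
    rw [hS k]
    simp only [innerSL_apply_apply, inner_smul_right]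
    rcases eq_or_ne k i with rfl | h
    · rw [horth k k, if_pos rfl, if_pos rfl]; ring
    · simp [horth i k, h, Ne.symm h]
  rw [h3] at h2
  have h4 : γ i * e.repr x i = (innerSL ℂ (e i)) (S x) :=
    (hasSum_ite_eq i (γ i * e.repr x i)).unique h2
  calc ⟪e i, S x⟫ = γ i * e.repr x i := h4.symm
    _ = γ i * ⟪e i, x⟫ := by rw [e.repr_apply_apply]

/-- Operator norm bound for diagonal operators. -/
lemma aux_diag_opnorm_le {H : Type*} [NormedAddCommGroup H] [InnerProductSpace ℂ H]
    [CompleteSpace H]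
    (e : HilbertBasis ℕ ℂ H) (S : H →L[ℂ] H) (γ : ℕ → ℂ) (ε : ℝ) (hε : 0 ≤ ε)
    (hS : ∀ k, S (e k) = γ k • e k) (hγ : ∀ k, ‖γ k‖ ≤ ε) : ‖S‖ ≤ ε := by
  refine S.opNorm_le_bound hε fun x => ?_
  have key : ∀ i, e.repr (S x) i = γ i * e.repr x i := by
    intro i
    rw [e.repr_apply_apply, e.repr_apply_apply]
    exact aux_diag_inner e S γ hS x i
  have hnx : ‖S x‖ = ‖e.repr (S x)‖ := (e.repr.norm_map (S x)).symm
  have hx : ‖x‖ = ‖e.repr x‖ := (e.repr.norm_map x).symm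
  rw [hnx, hx]
  have hp : 0 < (2 : ℝ≥0∞).toReal := by norm_num
  refine lp.norm_le_of_forall_sum_le hp (by positivity) fun s => ?_
  calc ∑ i ∈ s, ‖e.repr (S x) i‖ ^ (2 : ℝ≥0∞).toReal
      ≤ ∑ i ∈ s, (ε ^ (2 : ℝ≥0∞).toReal * ‖e.repr x i‖ ^ (2 : ℝ≥0∞).toReal) := by
        refine Finset.sum_le_sum fun i _ => ?_
        rw [← Real.mul_rpow hε (norm_nonneg _)]
        refine Real.rpow_le_rpow (norm_nonneg _) ?_ (by norm_num)
        rw [key i, norm_mul]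
        exact mul_le_mul_of_nonneg_right (hγ i) (norm_nonneg _)
    _ = ε ^ (2 : ℝ≥0∞).toReal * ∑ i ∈ s, ‖e.repr x i‖ ^ (2 : ℝ≥0∞).toReal := by
        rw [Finset.mul_sum]
    _ ≤ ε ^ (2 : ℝ≥0∞).toReal * ‖e.repr x‖ ^ (2 : ℝ≥0∞).toReal := by
        refine mul_le_mul_of_nonneg_left ?_ (Real.rpow_nonneg hε _)
        exact lp.sum_rpow_le_norm_rpow hp (e.repr x) s
    _ = (ε * ‖e.repr x‖) ^ (2 : ℝ≥0∞).toReal := (Real.mul_rpow hε (norm_nonneg _)).symm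

/-- For `λ₁ < λ₂`, the diagonal operator `D e_k = c_k e_k` with
`c_k = ∏_{ℓ<k} √((ℓ+λ₁)/(ℓ+λ₂))` intertwines the two Bergman backward shifts
(`T1 D = D T2`), is compact, and `c_k → 0`. -/
theorem bergman_shifts_compact_intertwiner
    {H : Type*} [NormedAddCommGroup H] [InnerProductSpace ℂ H] [CompleteSpace H]
    (e : HilbertBasis ℕ ℂ H) (l1 l2 : ℝ)
    (hl1 : 0 < l1) (hlt : l1 < l2)
    (T1 T2 D : H →L[ℂ] H)
    (hT1z : T1 (e 0) = 0)
    (hT1 : ∀ k : ℕ, T1 (e (k + 1)) = (Real.sqrt (((k : ℝ) + 1) / ((k : ℝ) + l1)) : ℂ) • e k)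
    (hT2z : T2 (e 0) = 0)
    (hT2 : ∀ k : ℕ, T2 (e (k + 1)) = (Real.sqrt (((k : ℝ) + 1) / ((k : ℝ) + l2)) : ℂ) • e k)
    (hD : ∀ k : ℕ,
      D (e k) = ((∏ ℓ ∈ range k, Real.sqrt (((ℓ : ℝ) + l1) / ((ℓ : ℝ) + l2)) : ℝ) : ℂ) • e k) :
    T1 ∘L D = D ∘L T2 ∧ IsCompactOperator ⇑D ∧
      Tendsto (fun k : ℕ => ∏ ℓ ∈ range k, Real.sqrt (((ℓ : ℝ) + l1) / ((ℓ : ℝ) + l2)))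
        atTop (nhds 0) := by
  classical
  have hl2 : 0 < l2 := hl1.trans hlt
  let c : ℕ → ℝ := fun k => ∏ ℓ ∈ range k, Real.sqrt (((ℓ : ℝ) + l1) / ((ℓ : ℝ) + l2))
  have hD' : ∀ k : ℕ, D (e k) = ((c k : ℝ) : ℂ) • e k := hD
  have hpos1 : ∀ ℓ : ℕ, (0 : ℝ) < (ℓ : ℝ) + l1 := fun ℓ => by positivity
  have hpos2 : ∀ ℓ : ℕ, (0 : ℝ) < (ℓ : ℝ) + l2 := fun ℓ => by positivity
  have hc_nonneg : ∀ k, 0 ≤ c k := fun k =>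
    Finset.prod_nonneg fun ℓ _ => Real.sqrt_nonneg _
  -- Part 3: c → 0
  have hd : (0 : ℝ) < l2 - l1 := by linarith
  have step : ∀ ℓ : ℕ, Real.sqrt (((ℓ : ℝ) + l1) / ((ℓ : ℝ) + l2))
      ≤ Real.exp (-((l2 - l1) / 2) * (1 / ((ℓ : ℝ) + l2))) := by
    intro ℓ
    have hxpos : (0 : ℝ) < ((ℓ : ℝ) + l1) / ((ℓ : ℝ) + l2) := div_pos (hpos1 ℓ) (hpos2 ℓ)
    rw [Real.sqrt_eq_rpow, Real.rpow_def_of_pos hxpos]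
    refine Real.exp_le_exp.mpr ?_
    have hlog : Real.log (((ℓ : ℝ) + l1) / ((ℓ : ℝ) + l2))
        ≤ ((ℓ : ℝ) + l1) / ((ℓ : ℝ) + l2) - 1 := Real.log_le_sub_one_of_pos hxpos
    have heq : ((ℓ : ℝ) + l1) / ((ℓ : ℝ) + l2) - 1 = -(l2 - l1) * (1 / ((ℓ : ℝ) + l2)) := by
      field_simp
      ring
    nlinarith [hlog, heq]
  have hc_le : ∀ k, c k ≤ Real.exp (∑ ℓ ∈ range k, -((l2 - l1) / 2) * (1 / ((ℓ : ℝ) + l2))) := by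
    intro k
    rw [Real.exp_sum]
    exact Finset.prod_le_prod (fun ℓ _ => Real.sqrt_nonneg _) fun ℓ _ => step ℓ
  have hS_atTop : Tendsto (fun k => ∑ ℓ ∈ range k, (1 / ((ℓ : ℝ) + l2))) atTop atTop := by
    have hbase : Tendsto (fun k : ℕ => ∑ ℓ ∈ range k, (1 / ((ℓ : ℝ) + 1))) atTop atTop :=
      Real.tendsto_sum_range_one_div_nat_succ_atTop
    have hC : (0 : ℝ) < 1 / (l2 + 1) := by positivity
    have hmul : Tendsto (fun k : ℕ => (1 / (l2 + 1)) * ∑ ℓ ∈ range k, (1 / ((ℓ : ℝ) + 1)))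
        atTop atTop := hbase.const_mul_atTop hC
    refine tendsto_atTop_mono (fun k => ?_) hmul
    rw [Finset.mul_sum]
    refine Finset.sum_le_sum fun ℓ _ => ?_
    rw [div_mul_div_comm, one_mul]
    refine one_div_le_one_div_of_le (hpos2 ℓ) ?_
    have hn : (0:ℝ) ≤ (ℓ:ℝ) := Nat.cast_nonneg ℓ
    nlinarith [hn, hl2]
  have hexp0 : Tendsto (fun k : ℕ =>
      Real.exp (∑ ℓ ∈ range k, -((l2 - l1) / 2) * (1 / ((ℓ : ℝ) + l2)))) atTop (nhds 0) := by
    have h1 : Tendsto (fun k : ℕ => ∑ ℓ ∈ range k, -((l2 - l1) / 2) * (1 / ((ℓ : ℝ) + l2)))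
        atTop atBot := by
      have hrw : (fun k : ℕ => ∑ ℓ ∈ range k, -((l2 - l1) / 2) * (1 / ((ℓ : ℝ) + l2)))
          = fun k : ℕ => -((l2 - l1) / 2) * ∑ ℓ ∈ range k, (1 / ((ℓ : ℝ) + l2)) := by
        funext k; rw [Finset.mul_sum]
      rw [hrw]
      exact hS_atTop.const_mul_atTop_of_neg (by linarith)
    exact Real.tendsto_exp_atBot.comp h1
  have hc0 : Tendsto c atTop (nhds 0) := squeeze_zero hc_nonneg hc_le hexp0
  -- Part 1: intertwining
  have hdense : Dense ((Submodule.span ℂ (Set.range ⇑e)) : Set H) :=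
    Submodule.dense_iff_topologicalClosure_eq_top.mpr e.dense_span
  have hkey : ∀ k : ℕ, (c (k + 1)) * Real.sqrt (((k : ℝ) + 1) / ((k : ℝ) + l1))
      = Real.sqrt (((k : ℝ) + 1) / ((k : ℝ) + l2)) * c k := by
    intro k
    have hcs : c (k + 1) = c k * Real.sqrt (((k : ℝ) + l1) / ((k : ℝ) + l2)) :=
      Finset.prod_range_succ _ k
    rw [hcs, mul_assoc, ← Real.sqrt_mul (div_pos (hpos1 k) (hpos2 k)).le]
    have harg : ((k : ℝ) + l1) / ((k : ℝ) + l2) * (((k : ℝ) + 1) / ((k : ℝ) + l1))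
        = ((k : ℝ) + 1) / ((k : ℝ) + l2) := by
      field_simp
    rw [harg, mul_comm]
  have hinter : T1 ∘L D = D ∘L T2 := by
    refine ContinuousLinearMap.ext_on hdense ?_
    rintro _ ⟨k, rfl⟩
    show T1 (D (e k)) = D (T2 (e k))
    cases k with
    | zero =>
      simp [hD' 0, hT1z, hT2z]
    | succ k =>
      rw [hD' (k + 1), map_smul, hT1 k, hT2 k, map_smul, hD' k, smul_smul, smul_smul]
      congr 1
      rw [← Complex.ofReal_mul, ← Complex.ofReal_mul]
      exact_mod_cast congrArg (fun t : ℝ => (t : ℂ)) (hkey k)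
  refine ⟨hinter, ?_, hc0⟩
  -- Part 2: compactness
  have horth := orthonormal_iff_ite.mp e.orthonormal
  let Dn : ℕ → (H →L[ℂ] H) :=
    fun n => ∑ k ∈ range n, ((c k : ℂ)) • (innerSL ℂ (e k)).smulRight (e k)
  have hDn_apply : ∀ n j, Dn n (e j) = (if j < n then (c j : ℂ) else 0) • e j := by
    intro n j
    show (∑ k ∈ range n, ((c k : ℂ)) • (innerSL ℂ (e k)).smulRight (e k)) (e j) = _
    simp only [ContinuousLinearMap.sum_apply, ContinuousLinearMap.smul_apply,
      ContinuousLinearMap.smulRight_apply, innerSL_apply_apply]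
    by_cases hj : j < n
    · rw [Finset.sum_eq_single j]
      · rw [horth j j, if_pos rfl, if_pos hj, one_smul]
      · intro k _ hk
        rw [horth k j, if_neg hk, zero_smul, smul_zero]
      · intro hmem
        exact absurd (Finset.mem_range.mpr hj) hmem
    · rw [if_neg hj, zero_smul, Finset.sum_eq_zero]
      intro k hk
      have hkj : k ≠ j := by
        intro h
        exact hj (h ▸ Finset.mem_range.mp hk)
      rw [horth k j, if_neg hkj, zero_smul, smul_zero]
  have hdiff_apply : ∀ n j, (D - Dn n) (e j) = (if j < n then 0 else (c j : ℂ)) • e j := by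
    intro n j
    rw [ContinuousLinearMap.sub_apply, hD' j, hDn_apply n j]
    by_cases hj : j < n
    · simp [hj]
    · simp [hj]
  have hcpt : ∀ n, IsCompactOperator ⇑(Dn n) := by
    intro n
    induction n with
    | zero =>
      have h0 : Dn 0 = 0 := by simp [Dn]
      rw [h0]
      exact isCompactOperator_zero
    | succ n ih =>
      have hstep : Dn (n + 1) = Dn n + ((c n : ℂ)) • (innerSL ℂ (e n)).smulRight (e n) :=
        Finset.sum_range_succ _ n
      have hrank1 : IsCompactOperator ⇑((innerSL ℂ (e n)).smulRight (e n)) := by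
        have hcoe : ⇑((innerSL ℂ (e n)).smulRight (e n))
            = (fun z : ℂ => z • e n) ∘ ⇑(innerSL ℂ (e n)) := rfl
        rw [hcoe]
        exact (aux_clm_scalar_compact (innerSL ℂ (e n))).continuous_comp
          (continuous_id.smul continuous_const)
      have hterm : IsCompactOperator ⇑(((c n : ℂ)) • (innerSL ℂ (e n)).smulRight (e n)) := by
        rw [ContinuousLinearMap.coe_smul']
        exact hrank1.smul _
      rw [hstep, ContinuousLinearMap.coe_add']
      exact ih.add hterm
  have htend : Tendsto (fun n => Dn n) atTop (nhds D) := by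
    rw [Metric.tendsto_atTop]
    intro ε hε
    obtain ⟨N, hN⟩ := Metric.tendsto_atTop.mp hc0 (ε / 2) (half_pos hε)
    refine ⟨N, fun n hn => ?_⟩
    have hbound : ‖D - Dn n‖ ≤ ε / 2 := by
      refine aux_diag_opnorm_le e (D - Dn n) (fun j => if j < n then 0 else (c j : ℂ)) (ε / 2)
        (le_of_lt (half_pos hε)) (hdiff_apply n) fun j => ?_
      by_cases hj : j < n
      · simp [hj, le_of_lt (half_pos hε)]
      · simp only [hj, if_false, Complex.norm_real]
        have hjN : N ≤ j := le_trans hn (not_lt.mp hj)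
        have hlt := hN j hjN
        rw [Real.dist_eq, sub_zero] at hlt
        exact le_of_lt hlt
    rw [dist_eq_norm, ← norm_neg, neg_sub]
    calc ‖D - Dn n‖ ≤ ε / 2 := hbound
      _ < ε := half_lt_self hε
  exact isCompactOperator_of_tendsto htend (Eventually.of_forall hcpt)
end

section
/- Suppose T = [[A, B],[0, C]] and T' = [[A', B'],[0, C']] are 2×2 upper triangular operators with AB = BC, A'B' = B'C', and the pair (A, C) satisfies Property (H) (ker τ_{A,C} ∩ ran τ_{A,C} = {0}). If X = [[X_{11}, X_{12}],[0, X_{22}]] is an invertible upper triangular operator with X T' = T X (so X_{11} A' = A X_{11}, X_{22} C' = C X_{22}, with X_{11}, X_{22} invertible), then B = X_{11} B' X_{22}^{-1}; equivalently, the diagonal part Diag(X) = X_{11} ⊕ X_{22} also intertwines T' and T. -/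
/-!
With `Y = X₂₂⁻¹`, the operator `X₁₁ B' Y - B` lies in the kernel of `τ_{A,C}`, because
`X₁₁`, `B'` and `Y` intertwine `A'` with `A`, `C'` with `A'` and `C` with `C'`, while
`AB = BC`. Multiplying the `(1,2)` entry of `X T' = T X` on the right by `Y` shows that it
is also `τ_{A,C}(X₁₂ Y)`, so Property (H) makes it vanish.
-/

open ContinuousLinearMap

section Semiring

variable {R : Type*} [Semiring R] {E₁ E₂ E₃ : Type*}
  [TopologicalSpace E₁] [AddCommMonoid E₁] [Module R E₁]
  [TopologicalSpace E₂] [AddCommMonoid E₂] [Module R E₂]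
  [TopologicalSpace E₃] [AddCommMonoid E₃] [Module R E₃]

theorem ContinuousLinearMap.intertwines_comp {T₁ : E₁ →L[R] E₁} {T₂ : E₂ →L[R] E₂}
    {T₃ : E₃ →L[R] E₃} {S : E₁ →L[R] E₂} {S' : E₂ →L[R] E₃}
    (hS : S ∘L T₁ = T₂ ∘L S) (hS' : S' ∘L T₂ = T₃ ∘L S') :
    (S' ∘L S) ∘L T₁ = T₃ ∘L (S' ∘L S) := by
  rw [comp_assoc, hS, ← comp_assoc, hS', comp_assoc]

theorem ContinuousLinearMap.intertwines_of_inverse {T₁ : E₁ →L[R] E₁}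
    {T₂ : E₂ →L[R] E₂} {S : E₁ →L[R] E₂} {S' : E₂ →L[R] E₁} (hS : S ∘L T₁ = T₂ ∘L S)
    (hS'S : S' ∘L S = ContinuousLinearMap.id R E₁)
    (hSS' : S ∘L S' = ContinuousLinearMap.id R E₂) :
    S' ∘L T₂ = T₁ ∘L S' :=
  calc S' ∘L T₂ = S' ∘L (T₂ ∘L S) ∘L S' := by rw [comp_assoc T₂, hSS', comp_id]
    _ = S' ∘L (S ∘L T₁) ∘L S' := by rw [hS]
    _ = T₁ ∘L S' := by rw [← comp_assoc, ← comp_assoc, hS'S, id_comp]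

end Semiring

theorem ContinuousLinearMap.sub_eq_rosenblum_of_triangular_intertwine
    {R : Type*} [Ring R] {E₁ E₂ F₁ F₂ : Type*}
    [TopologicalSpace E₁] [AddCommGroup E₁] [Module R E₁] [IsTopologicalAddGroup E₁]
    [TopologicalSpace E₂] [AddCommGroup E₂] [Module R E₂]
    [TopologicalSpace F₁] [AddCommGroup F₁] [Module R F₁]
    [TopologicalSpace F₂] [AddCommGroup F₂] [Module R F₂]
    {A : E₁ →L[R] E₁} {B : E₂ →L[R] E₁} {C : E₂ →L[R] E₂} {B' : F₂ →L[R] F₁}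
    {C' : F₂ →L[R] F₂} {X₁₁ : F₁ →L[R] E₁} {X₁₂ : F₂ →L[R] E₁} {X₂₂ : F₂ →L[R] E₂}
    {Y : E₂ →L[R] F₂} (h₁₂ : X₁₁ ∘L B' + X₁₂ ∘L C' = A ∘L X₁₂ + B ∘L X₂₂)
    (hY : X₂₂ ∘L Y = ContinuousLinearMap.id R E₂) (hC : Y ∘L C = C' ∘L Y) :
    X₁₁ ∘L B' ∘L Y - B = A ∘L (X₁₂ ∘L Y) - (X₁₂ ∘L Y) ∘L C := by
  have h := congrArg (· ∘L Y) h₁₂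
  simp only [add_comp, comp_assoc, ← hC, hY, comp_id] at h
  rw [sub_eq_sub_iff_add_eq_add, comp_assoc, h]

theorem propertyH_diagonal_intertwiner_general
    {H1 H2 H1' H2' : Type*}
    [NormedAddCommGroup H1] [NormedSpace ℂ H1] [NormedAddCommGroup H2] [NormedSpace ℂ H2]
    [NormedAddCommGroup H1'] [NormedSpace ℂ H1'] [NormedAddCommGroup H2'] [NormedSpace ℂ H2']
    (A : H1 →L[ℂ] H1) (C : H2 →L[ℂ] H2) (B : H2 →L[ℂ] H1)
    (A' : H1' →L[ℂ] H1') (C' : H2' →L[ℂ] H2') (B' : H2' →L[ℂ] H1')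
    (X11 : H1' →L[ℂ] H1) (X12 : H2' →L[ℂ] H1) (X22 : H2' →L[ℂ] H2)
    (X22inv : H2 →L[ℂ] H2')
    (hX22l : X22 ∘L X22inv = ContinuousLinearMap.id ℂ H2)
    (hX22r : X22inv ∘L X22 = ContinuousLinearMap.id ℂ H2')
    (hAB : A ∘L B = B ∘L C) (hA'B' : A' ∘L B' = B' ∘L C')
    (hH : ∀ Z : H2 →L[ℂ] H1, A ∘L Z = Z ∘L C →
      (∃ W : H2 →L[ℂ] H1, Z = A ∘L W - W ∘L C) → Z = 0)
    (h11 : X11 ∘L A' = A ∘L X11)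
    (h22 : X22 ∘L C' = C ∘L X22)
    (h12 : X11 ∘L B' + X12 ∘L C' = A ∘L X12 + B ∘L X22) :
    B = X11 ∘L B' ∘L X22inv := by
  have hinv : X22inv ∘L C = C' ∘L X22inv := intertwines_of_inverse h22 hX22r hX22l
  have hdiag : (X11 ∘L B' ∘L X22inv) ∘L C = A ∘L (X11 ∘L B' ∘L X22inv) :=
    intertwines_comp (intertwines_comp hinv hA'B'.symm) h11
  have hker : A ∘L (X11 ∘L B' ∘L X22inv - B) = (X11 ∘L B' ∘L X22inv - B) ∘L C := by
    rw [comp_sub, sub_comp, hdiag, hAB]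
  have hran := sub_eq_rosenblum_of_triangular_intertwine h12 hX22l hinv
  exact (sub_eq_zero.mp (hH _ hker ⟨_, hran⟩)).symm

/-- If `T = [[A,B],[0,C]]` and `T' = [[A',B'],[0,C']]` with `AB = BC`, `A'B' = B'C'`,
the pair `(A, C)` satisfies Property (H), and `X = [[X11,X12],[0,X22]]` is an
invertible upper-triangular operator with `X T' = T X`, then `B = X11 B' X22⁻¹`. -/
theorem propertyH_diagonal_intertwiner
    {H1 H2 H1' H2' : Type*}
    [NormedAddCommGroup H1] [NormedSpace ℂ H1] [NormedAddCommGroup H2] [NormedSpace ℂ H2]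
    [NormedAddCommGroup H1'] [NormedSpace ℂ H1'] [NormedAddCommGroup H2'] [NormedSpace ℂ H2']
    (A : H1 →L[ℂ] H1) (C : H2 →L[ℂ] H2) (B : H2 →L[ℂ] H1)
    (A' : H1' →L[ℂ] H1') (C' : H2' →L[ℂ] H2') (B' : H2' →L[ℂ] H1')
    (X11 : H1' →L[ℂ] H1) (X12 : H2' →L[ℂ] H1) (X22 : H2' →L[ℂ] H2)
    (X11inv : H1 →L[ℂ] H1') (X22inv : H2 →L[ℂ] H2')
    (hX11l : X11 ∘L X11inv = ContinuousLinearMap.id ℂ H1)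
    (hX11r : X11inv ∘L X11 = ContinuousLinearMap.id ℂ H1')
    (hX22l : X22 ∘L X22inv = ContinuousLinearMap.id ℂ H2)
    (hX22r : X22inv ∘L X22 = ContinuousLinearMap.id ℂ H2')
    (hAB : A ∘L B = B ∘L C) (hA'B' : A' ∘L B' = B' ∘L C')
    (hH : ∀ Z : H2 →L[ℂ] H1, A ∘L Z = Z ∘L C →
      (∃ W : H2 →L[ℂ] H1, Z = A ∘L W - W ∘L C) → Z = 0)
    (h11 : X11 ∘L A' = A ∘L X11)
    (h22 : X22 ∘L C' = C ∘L X22)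
    (h12 : X11 ∘L B' + X12 ∘L C' = A ∘L X12 + B ∘L X22) :
    B = X11 ∘L B' ∘L X22inv :=
  propertyH_diagonal_intertwiner_general A C B A' C' B' X11 X12 X22 X22inv hX22l hX22r hAB hA'B' hH
    h11 h22 h12
end

section
/- Let H = H1 ⊕ ... ⊕ Hn and let T = (T_{i,j}) and T' = (T'_{i,j}) be upper triangular n×n operator matrices whose diagonals T_{j,j}, T'_{j,j} satisfy: ker τ_{T_{j,j}, T_{ℓ,ℓ}} = {0} and ker τ_{T'_{j,j}, T'_{ℓ,ℓ}} = {0} for all j > ℓ, and every nonzero intertwiner between any T_{j,j} and T'_{k,k} has dense range. For n = 2: if X = [[X11, X12],[X21, X22]] is invertible with X T = T' X and ker τ_{T'_{2,2}, T'_{1,1}} = {0}, ker τ_{T_{2,2}, T_{1,1}} = {0}, and additionally ker τ_{T'_{2,2}, T_{1,1}} = {0} or ker τ_{T_{2,2}, T'_{1,1}} = {0}, then X21 = 0 and X^{-1} is also upper triangular, i.e., X is upper triangular. -/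
open ContinuousLinearMap

variable {H1 H2 : Type*}
  [NormedAddCommGroup H1] [NormedSpace ℂ H1] [NormedAddCommGroup H2] [NormedSpace ℂ H2]

/-- The `2×2` block operator `[[A, B],[C, D]]` on `H1 × H2`. -/
noncomputable def blockOp (A : H1 →L[ℂ] H1) (B : H2 →L[ℂ] H1)
    (C : H1 →L[ℂ] H2) (D : H2 →L[ℂ] H2) : (H1 × H2) →L[ℂ] (H1 × H2) :=
  (A ∘L ContinuousLinearMap.fst ℂ H1 H2 + B ∘L ContinuousLinearMap.snd ℂ H1 H2).prod
    (C ∘L ContinuousLinearMap.fst ℂ H1 H2 + D ∘L ContinuousLinearMap.snd ℂ H1 H2)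

lemma blockOp_apply (A : H1 →L[ℂ] H1) (B : H2 →L[ℂ] H1)
    (C : H1 →L[ℂ] H2) (D : H2 →L[ℂ] H2) (p : H1 × H2) :
    blockOp A B C D p = (A p.1 + B p.2, C p.1 + D p.2) := rfl

/-- Any invertible operator intertwining two upper-triangular `2×2` operator matrices
(whose diagonals have no nonzero intertwiners in the relevant directions, and such
that nonzero intertwiners between the diagonals have dense range) is upper triangular,
together with its inverse. -/
theorem intertwiner_of_upperTriangular_is_upperTriangular
    (T11 T11' : H1 →L[ℂ] H1) (T12 T12' : H2 →L[ℂ] H1) (T22 T22' : H2 →L[ℂ] H2)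
    (X11 Y11 : H1 →L[ℂ] H1) (X12 Y12 : H2 →L[ℂ] H1)
    (X21 Y21 : H1 →L[ℂ] H2) (X22 Y22 : H2 →L[ℂ] H2)
    (hkerT' : ∀ Z : H1 →L[ℂ] H2, T22' ∘L Z = Z ∘L T11' → Z = 0)
    (hkerT : ∀ Z : H1 →L[ℂ] H2, T22 ∘L Z = Z ∘L T11 → Z = 0)
    (hker3 : (∀ Z : H1 →L[ℂ] H2, T22' ∘L Z = Z ∘L T11 → Z = 0) ∨
      (∀ Z : H1 →L[ℂ] H2, T22 ∘L Z = Z ∘L T11' → Z = 0))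
    (hdr : ∀ Z : H1 →L[ℂ] H2,
      (T22' ∘L Z = Z ∘L T11 ∨ T22 ∘L Z = Z ∘L T11') → Z ≠ 0 → DenseRange Z)
    (hXY : blockOp X11 X12 X21 X22 ∘L blockOp Y11 Y12 Y21 Y22 = 1)
    (hYX : blockOp Y11 Y12 Y21 Y22 ∘L blockOp X11 X12 X21 X22 = 1)
    (hXT : blockOp X11 X12 X21 X22 ∘L blockOp T11 T12 0 T22 =
      blockOp T11' T12' 0 T22' ∘L blockOp X11 X12 X21 X22) :
    X21 = 0 ∧ Y21 = 0 := by
  -- X21 intertwines: T22' ∘ X21 = X21 ∘ T11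
  have hintX : T22' ∘L X21 = X21 ∘L T11 := by
    ext x
    have h := ContinuousLinearMap.ext_iff.mp hXT (x, 0)
    simp only [comp_apply, blockOp_apply, map_zero, add_zero, zero_apply, zero_add,
      Prod.mk.injEq] at h
    exact h.2.symm
  -- T ∘ Y = Y ∘ T'  (as multiplication in the algebra)
  have hTY : blockOp T11 T12 0 T22 * blockOp Y11 Y12 Y21 Y22 =
      blockOp Y11 Y12 Y21 Y22 * blockOp T11' T12' 0 T22' := by
    have hXT' : blockOp X11 X12 X21 X22 * blockOp T11 T12 0 T22 =
        blockOp T11' T12' 0 T22' * blockOp X11 X12 X21 X22 := hXT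
    have hYX' : blockOp Y11 Y12 Y21 Y22 * blockOp X11 X12 X21 X22 = 1 := hYX
    have hXY' : blockOp X11 X12 X21 X22 * blockOp Y11 Y12 Y21 Y22 = 1 := hXY
    calc blockOp T11 T12 0 T22 * blockOp Y11 Y12 Y21 Y22
        = (blockOp Y11 Y12 Y21 Y22 * blockOp X11 X12 X21 X22) *
            (blockOp T11 T12 0 T22 * blockOp Y11 Y12 Y21 Y22) := by
          rw [hYX', one_mul]
      _ = blockOp Y11 Y12 Y21 Y22 *
            ((blockOp X11 X12 X21 X22 * blockOp T11 T12 0 T22) * blockOp Y11 Y12 Y21 Y22) := by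
          rw [mul_assoc, mul_assoc]
      _ = (blockOp Y11 Y12 Y21 Y22 * blockOp T11' T12' 0 T22') *
            (blockOp X11 X12 X21 X22 * blockOp Y11 Y12 Y21 Y22) := by
          rw [hXT', mul_assoc, mul_assoc]
      _ = blockOp Y11 Y12 Y21 Y22 * blockOp T11' T12' 0 T22' := by
          rw [hXY', mul_one]
  -- Y21 intertwines: T22 ∘ Y21 = Y21 ∘ T11'
  have hintY : T22 ∘L Y21 = Y21 ∘L T11' := by
    ext x
    have h := ContinuousLinearMap.ext_iff.mp hTY (x, 0)
    simp only [ContinuousLinearMap.mul_apply, blockOp_apply, map_zero, add_zero, zero_apply, zero_add,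
      Prod.mk.injEq] at h
    exact h.2
  rcases hker3 with h3 | h3
  · -- X21 = 0 directly; show Y21 = 0 using dense range.
    have hX21 : X21 = 0 := h3 X21 hintX
    refine ⟨hX21, ?_⟩
    by_contra hY
    have hd : DenseRange Y21 := hdr Y21 (Or.inr hintY) hY
    -- X22 vanishes on the range of Y21
    have hv : ∀ x : H1, X22 (Y21 x) = 0 := by
      intro x
      have h := ContinuousLinearMap.ext_iff.mp hXY (x, 0)
      simp only [comp_apply, ContinuousLinearMap.one_apply, blockOp_apply, map_zero, add_zero,
        Prod.mk.injEq, hX21, zero_apply, zero_add] at h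
      exact h.2
    have hX22 : (X22 : H2 → H2) = fun _ => 0 :=
      Continuous.ext_on hd X22.continuous continuous_const
        (by rintro _ ⟨x, rfl⟩; exact hv x)
    -- but X22 ∘ Y22 = 1
    have hinv : ∀ y : H2, X22 (Y22 y) = y := by
      intro y
      have h := ContinuousLinearMap.ext_iff.mp hXY (0, y)
      simp only [comp_apply, ContinuousLinearMap.one_apply, blockOp_apply, map_zero, zero_add,
        Prod.mk.injEq, hX21, zero_apply] at h
      exact h.2
    obtain ⟨x, hx⟩ : ∃ x, Y21 x ≠ 0 := by
      by_contra h
      push_neg at h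
      exact hY (ContinuousLinearMap.ext (by simpa using h))
    have := hinv (Y21 x)
    rw [congrFun hX22 (Y22 (Y21 x))] at this
    exact hx this.symm
  · -- Y21 = 0 directly; show X21 = 0 using dense range.
    have hY21 : Y21 = 0 := h3 Y21 hintY
    refine ⟨?_, hY21⟩
    by_contra hX
    have hd : DenseRange X21 := hdr X21 (Or.inl hintX) hX
    have hv : ∀ x : H1, Y22 (X21 x) = 0 := by
      intro x
      have h := ContinuousLinearMap.ext_iff.mp hYX (x, 0)
      simp only [comp_apply, ContinuousLinearMap.one_apply, blockOp_apply, map_zero, add_zero,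
        Prod.mk.injEq, hY21, zero_apply, zero_add] at h
      exact h.2
    have hY22 : (Y22 : H2 → H2) = fun _ => 0 :=
      Continuous.ext_on hd Y22.continuous continuous_const
        (by rintro _ ⟨x, rfl⟩; exact hv x)
    have hinv : ∀ y : H2, Y22 (X22 y) = y := by
      intro y
      have h := ContinuousLinearMap.ext_iff.mp hYX (0, y)
      simp only [comp_apply, ContinuousLinearMap.one_apply, blockOp_apply, map_zero, zero_add,
        Prod.mk.injEq, hY21, zero_apply] at h
      exact h.2
    obtain ⟨x, hx⟩ : ∃ x, X21 x ≠ 0 := by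
      by_contra h
      push_neg at h
      exact hX (ContinuousLinearMap.ext (by simpa using h))
    have := hinv (X21 x)
    rw [congrFun hY22 (X22 (X21 x))] at this
    exact hx this.symm
end
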